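/- arXiv:2302.01916 — 6 statements merged into one kernel-verified Lean document; each statement's English description precedes it below -/
import Mathlib

section
/- For integers k, m with 1 ≤ k ≤ m/3 and m ≥ 4k² + 5k, the spectral radius ρ(S_{m-k+1}^k) is the largest real root of the polynomial x³ - x² - (m-k)x + (m-3k), and it satisfies √(m-k) < ρ(S_{m-k+1}^k) ≤ √(m-k+1). -/
open Matrix SimpleGraph
open scoped Classical

/-- The spectral radius of a finite simple graph: the largest (real) eigenvalue
of its adjacency matrix. -/
noncomputable def specRad {V : Type*} [Fintype V] (G : SimpleGraph V) : ℝ :=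
  sSup {t : ℝ | ∃ x : V → ℝ, x ≠ 0 ∧ G.adjMatrix ℝ *ᵥ x = t • x}

/-- `x` is a Perron vector of `G`: positive entries and an eigenvector for the
spectral radius. -/
def IsPerronVector {V : Type*} [Fintype V] (G : SimpleGraph V) (x : V → ℝ) : Prop :=
  (∀ v, 0 < x v) ∧ G.adjMatrix ℝ *ᵥ x = specRad G • x

/-- `G` contains a copy of `F` as a (not necessarily induced) subgraph. -/
def ContainsSub {α β : Type*} (F : SimpleGraph α) (G : SimpleGraph β) : Prop :=
  ∃ f : α ↪ β, ∀ ⦃a b⦄, F.Adj a b → G.Adj (f a) (f b)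

/-- Number of edges of `G` with both endpoints in `S`. -/
noncomputable def eIn {V : Type*} (G : SimpleGraph V) (S : Set V) : ℕ :=
  {e ∈ G.edgeSet | ∀ v ∈ e, v ∈ S}.ncard

/-- The cycle graph `C_n` on `Fin n`. -/
def cycG (n : ℕ) : SimpleGraph (Fin n) :=
  SimpleGraph.fromRel (fun a b => b.val = (a.val + 1) % n)

/-- The star `K_{1,r}` on `r+1` vertices, center `0`. -/
def starG (r : ℕ) : SimpleGraph (Fin (r + 1)) :=
  SimpleGraph.fromRel (fun a _ => a.val = 0)

/-- `S_n^k`: the star `K_{1,n-1}` (center `0`) together with `k` disjoint edges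
`(1,2), (3,4), …, (2k-1,2k)` inside its independent set. -/
def Sgraph (n k : ℕ) : SimpleGraph (Fin n) :=
  SimpleGraph.fromRel (fun a b =>
    a.val = 0 ∨ (a.val % 2 = 1 ∧ b.val = a.val + 1 ∧ b.val ≤ 2 * k))

/-- `C_5 • K_{1,m-5}`: the cycle `0-1-2-3-4-0` with `m-5` pendant vertices
attached to vertex `0`; it has `m` edges. -/
def C5DotStar (m : ℕ) : SimpleGraph (Fin m) :=
  SimpleGraph.fromRel (fun a b =>
    (a.val < 5 ∧ b.val < 5 ∧ b.val = (a.val + 1) % 5) ∨ (a.val = 0 ∧ 5 ≤ b.val))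

/-- `S_{n,2}`: `K_2` (vertices 0,1) joined to `n-2` isolated vertices. -/
def Snk2 (n : ℕ) : SimpleGraph (Fin n) :=
  SimpleGraph.fromRel (fun a _ => a.val < 2)

/-- `S_{n,2}^-`: `S_{n,2}` minus one edge (the edge `1-2`) incident to a vertex
of degree two. -/
def Snk2Minus (n : ℕ) : SimpleGraph (Fin n) :=
  SimpleGraph.fromRel (fun a b => a.val = 0 ∨ (a.val = 1 ∧ b.val ≠ 2))

/-- `C_t^+`: the cycle `C_t` on `0,…,t-1` and a triangle glued along the edge
`0-1`, via the extra vertex `t`. -/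
def CtPlus (t : ℕ) : SimpleGraph (Fin (t + 1)) :=
  SimpleGraph.fromRel (fun a b =>
    (a.val < t ∧ b.val < t ∧ b.val = (a.val + 1) % t) ∨ (a.val = t ∧ b.val ≤ 1))

/-- The double star `D_{a,b}`: adjacent centers `0, 1`; `0` has `a` further
leaves, `1` has `b` further leaves. -/
def doubleStar (a b : ℕ) : SimpleGraph (Fin (a + b + 2)) :=
  SimpleGraph.fromRel (fun x y =>
    (x.val = 0 ∧ (y.val = 1 ∨ (2 ≤ y.val ∧ y.val < a + 2))) ∨
    (x.val = 1 ∧ a + 2 ≤ y.val))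

/-- The graph `G₁₄(t,r)`: `u = 0` adjacent to everything, `u₀ = 1` adjacent to
`u_1,…,u_r` (vertices `2,…,r+1`), and `t` further vertices adjacent only to `0`. -/
def G14 (t r : ℕ) : SimpleGraph (Fin (t + r + 2)) :=
  SimpleGraph.fromRel (fun a b => a.val = 0 ∨ (a.val = 1 ∧ 2 ≤ b.val ∧ b.val ≤ r + 1))

/-- `S_m^e`: the star `K_{1,m-1}` (center 0, leaves `1,…,m-1`) with a pendant
vertex `m` attached to the leaf `1`. -/
def SmE (m : ℕ) : SimpleGraph (Fin (m + 1)) :=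
  SimpleGraph.fromRel (fun a b =>
    (a.val = 0 ∧ 1 ≤ b.val ∧ b.val ≤ m - 1) ∨ (a.val = 1 ∧ b.val = m))

/-- `K_{1,m-1} ∪ P_2`: the star with center 0 and leaves `1,…,m-1`, together
with the disjoint edge `m-(m+1)`. -/
def starUnionP2 (m : ℕ) : SimpleGraph (Fin (m + 2)) :=
  SimpleGraph.fromRel (fun a b =>
    (a.val = 0 ∧ 1 ≤ b.val ∧ b.val ≤ m - 1) ∨ (a.val = m ∧ b.val = m + 1))

/-- `N_0(u)`: neighbors of `u` having no neighbor inside `N(u)`. -/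
def N0 {V : Type*} (G : SimpleGraph V) (u : V) : Set V :=
  {v | G.Adj u v ∧ ∀ w, G.Adj v w → ¬ G.Adj u w}

/-- `N_+(u) = N(u) \ N_0(u)`. -/
def Nplus {V : Type*} (G : SimpleGraph V) (u : V) : Set V :=
  G.neighborSet u \ N0 G u

/-- `N_1(u)`: neighbors of `u` having exactly one neighbor inside `N(u)`. -/
noncomputable def N1set {V : Type*} (G : SimpleGraph V) (u : V) : Set V :=
  {v | G.Adj u v ∧ (G.neighborSet v ∩ G.neighborSet u).ncard = 1}

/-- `W = V(G) \ N[u]`. -/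
def Wset {V : Type*} (G : SimpleGraph V) (u : V) : Set V :=
  {v | v ≠ u ∧ ¬ G.Adj u v}

section SgraphAux
open Finset

variable {a k : ℕ}

lemma adj_char (u v : Fin (a+1)) :
    (Sgraph (a+1) k).Adj u v ↔ u.val ≠ v.val ∧
      (u.val = 0 ∨ v.val = 0 ∨
       (u.val % 2 = 1 ∧ v.val = u.val + 1 ∧ v.val ≤ 2*k) ∨
       (v.val % 2 = 1 ∧ u.val = v.val + 1 ∧ u.val ≤ 2*k)) := by
  simp only [Sgraph, SimpleGraph.fromRel_adj, ne_eq, Fin.ext_iff]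
  tauto

lemma mulVec_leaf (hk : 1 ≤ k) (x : Fin (a+1) → ℝ)
    (v : Fin (a+1)) (hv : 2*k < v.val) :
    ((Sgraph (a+1) k).adjMatrix ℝ *ᵥ x) v = x 0 := by
  rw [SimpleGraph.adjMatrix_mulVec_apply]
  have h : (Sgraph (a+1) k).neighborFinset v = {0} := by
    ext u
    simp only [SimpleGraph.mem_neighborFinset, adj_char, Finset.mem_singleton, Fin.ext_iff,
      Fin.val_zero]
    omega
  rw [h, Finset.sum_singleton]

lemma mulVec_pair_odd (hka : 2*k ≤ a) (x : Fin (a+1) → ℝ)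
    (v : Fin (a+1)) (h1 : v.val % 2 = 1) (h2 : v.val ≤ 2*k) :
    ((Sgraph (a+1) k).adjMatrix ℝ *ᵥ x) v = x 0 + x ⟨v.val + 1, by omega⟩ := by
  rw [SimpleGraph.adjMatrix_mulVec_apply]
  have h : (Sgraph (a+1) k).neighborFinset v = {0, ⟨v.val + 1, by omega⟩} := by
    ext u
    simp only [SimpleGraph.mem_neighborFinset, adj_char, Finset.mem_insert,
      Finset.mem_singleton, Fin.ext_iff, Fin.val_zero]
    omega
  rw [h, Finset.sum_pair (by simp only [ne_eq, Fin.ext_iff, Fin.val_zero]; omega)]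

lemma mulVec_pair_even (hka : 2*k ≤ a) (x : Fin (a+1) → ℝ)
    (v : Fin (a+1)) (h0 : 1 ≤ v.val) (h1 : v.val % 2 = 0) (h2 : v.val ≤ 2*k) :
    ((Sgraph (a+1) k).adjMatrix ℝ *ᵥ x) v = x 0 + x ⟨v.val - 1, by omega⟩ := by
  rw [SimpleGraph.adjMatrix_mulVec_apply]
  have h : (Sgraph (a+1) k).neighborFinset v = {0, ⟨v.val - 1, by omega⟩} := by
    ext u
    simp only [SimpleGraph.mem_neighborFinset, adj_char, Finset.mem_insert,
      Finset.mem_singleton, Fin.ext_iff, Fin.val_zero]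
    omega
  rw [h, Finset.sum_pair (by simp only [ne_eq, Fin.ext_iff, Fin.val_zero]; omega)]

lemma mulVec_center (x : Fin (a+1) → ℝ) :
    ((Sgraph (a+1) k).adjMatrix ℝ *ᵥ x) 0 = (∑ u, x u) - x 0 := by
  rw [SimpleGraph.adjMatrix_mulVec_apply]
  have h : (Sgraph (a+1) k).neighborFinset 0 = Finset.univ.erase 0 := by
    ext u
    simp only [SimpleGraph.mem_neighborFinset, adj_char, Finset.mem_erase, Finset.mem_univ,
      and_true, ne_eq, Fin.ext_iff, Fin.val_zero, true_or]
    omega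
  rw [h, Finset.sum_erase_eq_sub (Finset.mem_univ 0)]

lemma sum_split (hka : 2*k ≤ a) (x : Fin (a+1) → ℝ) (c d : ℝ)
    (hc : ∀ (i : ℕ) (h : i < a+1), 1 ≤ i → i ≤ 2*k → x ⟨i, h⟩ = c)
    (hd : ∀ (i : ℕ) (h : i < a+1), 2*k < i → x ⟨i, h⟩ = d) :
    ∑ v, x v = x 0 + (2*k : ℕ) * c + ((a - 2*k : ℕ) : ℝ) * d := by
  classical
  set f : ℕ → ℝ := fun i => if h : i < a + 1 then x ⟨i, h⟩ else 0 with hf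
  have key : ∑ v : Fin (a+1), x v = ∑ i ∈ Finset.range (a+1), f i := by
    rw [Finset.sum_range fun i => f i]
    apply Finset.sum_congr rfl
    intro v _
    simp only [hf, v.isLt, dif_pos]
  rw [key, Finset.range_eq_Ico,
    ← Finset.sum_Ico_consecutive f (by omega : (0:ℕ) ≤ 2*k+1) (by omega : 2*k+1 ≤ a+1),
    ← Finset.sum_Ico_consecutive f (Nat.zero_le 1) (by omega : 1 ≤ 2*k+1)]
  have e0 : Finset.Ico 0 1 = {(0:ℕ)} := rfl
  have h1 : ∑ i ∈ Finset.Ico 0 1, f i = x 0 := by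
    rw [e0, Finset.sum_singleton, hf]
    simp only [dif_pos (by omega : 0 < a+1)]
    congr 1
  have h2 : ∑ i ∈ Finset.Ico 1 (2*k+1), f i = (2*k : ℕ) * c := by
    have hcongr : ∀ i ∈ Finset.Ico 1 (2*k+1), f i = c := by
      intro i hi
      simp only [Finset.mem_Ico] at hi
      have hlt : i < a + 1 := by omega
      simp only [hf, hlt, dif_pos]
      exact hc i hlt (by omega) (by omega)
    rw [Finset.sum_congr rfl hcongr, Finset.sum_const, Nat.card_Ico, nsmul_eq_mul]
    norm_num
  have h3 : ∑ i ∈ Finset.Ico (2*k+1) (a+1), f i = ((a - 2*k : ℕ) : ℝ) * d := by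
    have hcongr : ∀ i ∈ Finset.Ico (2*k+1) (a+1), f i = d := by
      intro i hi
      simp only [Finset.mem_Ico] at hi
      have hlt : i < a + 1 := by omega
      simp only [hf, hlt, dif_pos]
      exact hd i hlt (by omega)
    rw [Finset.sum_congr rfl hcongr, Finset.sum_const, Nat.card_Ico, nsmul_eq_mul]
    congr 2
    omega
  rw [h1, h2, h3]

lemma root_is_eig (hk : 1 ≤ k) (hka : 2*k ≤ a) (y : ℝ) (hy0 : y ≠ 0) (hy1 : y ≠ 1)
    (hroot : y^3 - y^2 - (a:ℝ)*y + ((a:ℝ) - 2*(k:ℝ)) = 0) :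
    ∃ x : Fin (a+1) → ℝ, x ≠ 0 ∧ (Sgraph (a+1) k).adjMatrix ℝ *ᵥ x = y • x := by
  have hy1' : y - 1 ≠ 0 := sub_ne_zero.2 hy1
  set x : Fin (a+1) → ℝ :=
    fun v => if v.val = 0 then 1 else if v.val ≤ 2*k then 1/(y-1) else 1/y with hxdef
  have hxval : ∀ (i : ℕ) (h : i < a+1),
      x ⟨i, h⟩ = if i = 0 then 1 else if i ≤ 2*k then 1/(y-1) else 1/y := fun i h => rfl
  have hx0 : x 0 = 1 := by
    have := hxval 0 (by omega)
    simpa using this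
  refine ⟨x, ?_, ?_⟩
  · intro h
    have h0 : x 0 = 0 := by rw [h]; rfl
    rw [hx0] at h0; norm_num at h0
  · funext v
    have hv : x v = x ⟨v.val, v.isLt⟩ := rfl
    simp only [Pi.smul_apply, smul_eq_mul]
    rcases lt_or_ge (2*k) v.val with hbig | hle
    · -- leaf
      rw [mulVec_leaf hk x v hbig, hx0, hv, hxval]
      rw [if_neg (by omega), if_neg (by omega)]
      field_simp
    · rcases Nat.eq_zero_or_pos v.val with h0 | hpos
      · -- center
        have hveq : v = 0 := Fin.ext (by simpa using h0)
        subst hveq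
        rw [mulVec_center,
          sum_split hka x (1/(y-1)) (1/y) (fun i h hi1 hi2 => by
            rw [hxval]; rw [if_neg (by omega), if_pos hi2])
          (fun i h hi => by rw [hxval]; rw [if_neg (by omega), if_neg (by omega)]), hx0]
        have hc : ((a - 2*k : ℕ) : ℝ) = (a:ℝ) - 2*(k:ℝ) := by
          push_cast [Nat.cast_sub hka]; ring
        rw [hc]
        field_simp
        push_cast
        linear_combination (-1 : ℝ) * hroot
      · -- pair
        have hxv : x ⟨v.val, v.isLt⟩ = 1/(y-1) := by
          rw [hxval, if_neg (by omega), if_pos hle]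
        rcases Nat.even_or_odd v.val with he | ho
        · have h2 : v.val % 2 = 0 := Nat.even_iff.1 he
          have hxw : ∀ (h : v.val - 1 < a+1), x ⟨v.val - 1, h⟩ = 1/(y-1) := fun h => by
            rw [hxval, if_neg (by omega), if_pos (by omega)]
          rw [mulVec_pair_even hka x v hpos h2 hle, hx0, hv, hxv, hxw]
          field_simp
          ring
        · have h2 : v.val % 2 = 1 := Nat.odd_iff.1 ho
          have hxw : ∀ (h : v.val + 1 < a+1), x ⟨v.val + 1, h⟩ = 1/(y-1) := fun h => by
            rw [hxval, if_neg (by omega), if_pos (by omega)]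
          rw [mulVec_pair_odd hka x v h2 hle, hx0, hv, hxv, hxw]
          field_simp
          ring

lemma eig_root (hk : 1 ≤ k) (hka : 2*k + 1 ≤ a) (t : ℝ) (h0 : t ≠ 0) (h1 : t ≠ 1)
    (hm1 : t ≠ -1) (x : Fin (a+1) → ℝ) (hx : x ≠ 0)
    (heq : (Sgraph (a+1) k).adjMatrix ℝ *ᵥ x = t • x) :
    t^3 - t^2 - (a:ℝ)*t + ((a:ℝ) - 2*(k:ℝ)) = 0 := by
  have hka' : 2*k ≤ a := by omega
  have ht1 : t - 1 ≠ 0 := sub_ne_zero.2 h1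
  have htm1 : t + 1 ≠ 0 := by intro h; apply hm1; linarith
  have heqv : ∀ v, ((Sgraph (a+1) k).adjMatrix ℝ *ᵥ x) v = t * x v := fun v => by
    rw [heq]; rfl
  have hleaf : ∀ (i : ℕ) (h : i < a+1), 2*k < i → x ⟨i, h⟩ = x 0 / t := by
    intro i h hi
    have e := heqv ⟨i, h⟩
    rw [mulVec_leaf hk x ⟨i, h⟩ hi] at e
    field_simp
    linarith [e]
  have hpair : ∀ (i : ℕ) (h : i < a+1), 1 ≤ i → i ≤ 2*k → x ⟨i, h⟩ = x 0 / (t-1) := by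
    intro i h hi1 hi2
    have key : ∀ (v w : Fin (a+1)), x 0 + x w = t * x v → x 0 + x v = t * x w →
        x v = x 0 / (t - 1) := by
      intro v w e1 e2
      have hvw : x v = x w := by
        have hz : (t + 1) * (x v - x w) = 0 := by linear_combination e2 - e1
        rcases mul_eq_zero.1 hz with hz | hz
        · exact absurd hz htm1
        · linarith [sub_eq_zero.1 hz]
      rw [hvw] at e2 ⊢
      field_simp
      linarith [e2]
    rcases Nat.even_or_odd i with he | ho
    · have h2 : i % 2 = 0 := Nat.even_iff.1 he
      have hw : i - 1 < a + 1 := by omega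
      have e1 := heqv ⟨i, h⟩
      rw [mulVec_pair_even hka' x ⟨i, h⟩ hi1 h2 hi2] at e1
      have e2 := heqv ⟨i-1, hw⟩
      rw [mulVec_pair_odd hka' x ⟨i-1, hw⟩ (show (i-1) % 2 = 1 by omega) (show i-1 ≤ 2*k by omega)] at e2
      simp only [show i - 1 + 1 = i from by omega] at e2
      exact key _ _ e1 e2
    · have h2 : i % 2 = 1 := Nat.odd_iff.1 ho
      have hw : i + 1 < a + 1 := by omega
      have e1 := heqv ⟨i, h⟩
      rw [mulVec_pair_odd hka' x ⟨i, h⟩ h2 hi2] at e1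
      have e2 := heqv ⟨i+1, hw⟩
      rw [mulVec_pair_even hka' x ⟨i+1, hw⟩ (show 1 ≤ i+1 by omega) (show (i+1) % 2 = 0 by omega) (show i+1 ≤ 2*k by omega)] at e2
      simp only [show i + 1 - 1 = i from by omega] at e2
      exact key _ _ e1 e2
  have hx0 : x 0 ≠ 0 := by
    intro hz
    apply hx
    funext v
    have hv : x v = x ⟨v.val, v.isLt⟩ := rfl
    rcases lt_or_ge (2*k) v.val with hbig | hle
    · rw [hv, hleaf v.val v.isLt hbig, hz]; simp
    · rcases Nat.eq_zero_or_pos v.val with hv0 | hpos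
      · have : v = 0 := Fin.ext (by simpa using hv0)
        rw [this, hz]; rfl
      · rw [hv, hpair v.val v.isLt hpos hle, hz]; simp
  have ec := heqv 0
  rw [mulVec_center, sum_split hka' x (x 0 / (t-1)) (x 0 / t) hpair hleaf] at ec
  have hc : ((a - 2*k : ℕ) : ℝ) = (a:ℝ) - 2*(k:ℝ) := by
    push_cast [Nat.cast_sub hka']; ring
  rw [hc] at ec
  have hgoal : x 0 * (t^3 - t^2 - (a:ℝ)*t + ((a:ℝ) - 2*(k:ℝ))) = 0 := by
    field_simp at ec
    push_cast at ec
    linear_combination (-x 0) * ec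
  rcases mul_eq_zero.1 hgoal with h | h
  · exact absurd h hx0
  · exact h

lemma main_spec (a k : ℕ) (hk : 1 ≤ k) (ha : 4*k^2 + 4*k ≤ a) :
    (specRad (Sgraph (a+1) k) ^ 3 - specRad (Sgraph (a+1) k) ^ 2
        - (a:ℝ) * specRad (Sgraph (a+1) k) + ((a:ℝ) - 2*(k:ℝ)) = 0) ∧
    (∀ y : ℝ, y ^ 3 - y ^ 2 - (a:ℝ) * y + ((a:ℝ) - 2*(k:ℝ)) = 0 →
        y ≤ specRad (Sgraph (a+1) k)) ∧
    Real.sqrt (a:ℝ) < specRad (Sgraph (a+1) k) ∧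
    specRad (Sgraph (a+1) k) ≤ Real.sqrt ((a:ℝ) + 1) := by
  have hK1 : (1:ℝ) ≤ (k:ℝ) := by exact_mod_cast hk
  have hA : 4*(k:ℝ)^2 + 4*(k:ℝ) ≤ (a:ℝ) := by exact_mod_cast ha
  have hA8 : (8:ℝ) ≤ (a:ℝ) := by nlinarith
  have hA0 : (0:ℝ) ≤ (a:ℝ) := by linarith
  set A := (a:ℝ)
  set K := (k:ℝ)
  set p : ℝ → ℝ := fun y => y^3 - y^2 - A*y + (A - 2*K) with hp
  have hpfac : ∀ y, p y = (y-1)*(y^2 - A) - 2*K := fun y => by simp only [hp]; ring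
  -- sqrt facts
  have hs0 : (0:ℝ) ≤ Real.sqrt A := Real.sqrt_nonneg _
  have hsq : Real.sqrt A ^ 2 = A := Real.sq_sqrt hA0
  have hsq1 : Real.sqrt (A+1) ^ 2 = A + 1 := Real.sq_sqrt (by linarith)
  have hsle : Real.sqrt A ≤ Real.sqrt (A+1) := Real.sqrt_le_sqrt (by linarith)
  have hs1 : 2*K + 1 ≤ Real.sqrt (A+1) := by
    nlinarith [Real.sqrt_nonneg (A+1), hsq1]
  have hsA1 : (1:ℝ) < Real.sqrt A := by
    nlinarith [hsq, hs0]
  -- roots are ≤ sqrt (A+1)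
  have hub_root : ∀ y, p y = 0 → y ≤ Real.sqrt (A+1) := by
    intro y hy
    by_contra hgt
    push_neg at hgt
    have h1 : 2*K < y - 1 := by linarith
    have h2 : A + 1 < y^2 := by nlinarith [Real.sqrt_nonneg (A+1)]
    have : 0 < p y := by rw [hpfac]; nlinarith
    linarith [this.ne' hy]
  -- p is negative at sqrt A, nonneg at sqrt (A+1)
  have hpA : p (Real.sqrt A) = -(2*K) := by
    rw [hpfac]
    rw [hsq]; ring
  have hpA1 : 0 ≤ p (Real.sqrt (A+1)) := by
    rw [hpfac, hsq1]
    nlinarith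
  -- IVT root
  obtain ⟨r₀, hr₀mem, hr₀⟩ : ∃ r ∈ Set.Icc (Real.sqrt A) (Real.sqrt (A+1)), p r = 0 := by
    have hc : ContinuousOn p (Set.Icc (Real.sqrt A) (Real.sqrt (A+1))) := by
      apply Continuous.continuousOn
      simp only [hp]
      fun_prop
    have := intermediate_value_Icc hsle hc
    have h0mem : (0:ℝ) ∈ Set.Icc (p (Real.sqrt A)) (p (Real.sqrt (A+1))) := by
      constructor
      · rw [hpA]; linarith
      · exact hpA1
    obtain ⟨r, hr, hr0⟩ := this h0mem
    exact ⟨r, hr, hr0⟩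
  have hr₀gt : Real.sqrt A < r₀ := by
    rcases lt_or_eq_of_le hr₀mem.1 with h | h
    · exact h
    · exfalso; rw [← h, hpA] at hr₀; linarith
  -- roots are not 0 or 1
  have hroot_ne : ∀ y, p y = 0 → y ≠ 0 ∧ y ≠ 1 := by
    intro y hy
    constructor
    · intro h; rw [h, hpfac] at hy; nlinarith
    · intro h; rw [h, hpfac] at hy; nlinarith
  set E := {t : ℝ | ∃ x : Fin (a+1) → ℝ, x ≠ 0 ∧ (Sgraph (a+1) k).adjMatrix ℝ *ᵥ x = t • x}
    with hE
  have hka : 2*k ≤ a := by nlinarith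
  have hka1 : 2*k + 1 ≤ a := by nlinarith
  have hRsub : {y : ℝ | p y = 0} ⊆ E := by
    intro y hy
    obtain ⟨hy0, hy1⟩ := hroot_ne y hy
    exact root_is_eig hk hka y hy0 hy1 hy
  have hEsub : E ⊆ {(0:ℝ), 1, -1} ∪ {y : ℝ | p y = 0} := by
    intro t ht
    by_cases h0 : t = 0
    · left; simp [h0]
    by_cases h1 : t = 1
    · left; simp [h1]
    by_cases hm1 : t = -1
    · left; simp [hm1]
    right
    obtain ⟨x, hx, heq⟩ := ht
    exact eig_root hk hka1 t h0 h1 hm1 x hx heq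
  have hub : ∀ t ∈ E, t ≤ Real.sqrt (A+1) := by
    intro t ht
    rcases hEsub ht with h | h
    · simp only [Set.mem_insert_iff, Set.mem_singleton_iff] at h
      have h3 : (3:ℝ) ≤ Real.sqrt (A+1) := by linarith
      rcases h with h | h | h <;> subst h <;> linarith
    · exact hub_root t h
  have hBdd : BddAbove E := ⟨Real.sqrt (A+1), hub⟩
  have hne : E.Nonempty := ⟨r₀, hRsub hr₀⟩
  have hspec : specRad (Sgraph (a+1) k) = sSup E := rfl
  have hgt : Real.sqrt A < sSup E := lt_of_lt_of_le hr₀gt (le_csSup hBdd (hRsub hr₀))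
  have hle : sSup E ≤ Real.sqrt (A+1) := csSup_le hne hub
  have hclosed : IsClosed ({(0:ℝ), 1, -1} ∪ {y : ℝ | p y = 0}) := by
    apply IsClosed.union
    · exact (Set.Finite.insert _ (Set.Finite.insert _ (Set.finite_singleton _))).isClosed
    · exact isClosed_eq (by simp only [hp]; fun_prop) continuous_const
  have hmem : sSup E ∈ {(0:ℝ), 1, -1} ∪ {y : ℝ | p y = 0} := by
    have h := csSup_mem_closure hne hBdd
    exact hclosed.closure_subset ((closure_mono hEsub) h)
  have hroot : p (sSup E) = 0 := by
    rcases hmem with h | h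
    · exfalso
      rcases h with h | h | h <;> rw [h] at hgt <;> linarith
    · exact h
  refine ⟨?_, ?_, ?_, ?_⟩
  · rw [hspec]; exact hroot
  · intro y hy
    rw [hspec]
    exact le_csSup hBdd (hRsub hy)
  · rw [hspec]; exact hgt
  · rw [hspec]; exact hle

end SgraphAux

/-- For `1 ≤ k ≤ m/3` and `m ≥ 4k² + 5k`, `ρ(S_{m-k+1}^k)` is the largest real root of
`x³ - x² - (m-k)x + (m-3k)`, and `√(m-k) < ρ(S_{m-k+1}^k) ≤ √(m-k+1)`. -/
theorem stmt2 (k m : ℕ) (hk : 1 ≤ k) (hkm : 3 * k ≤ m)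
    (hm : 4 * k ^ 2 + 5 * k ≤ m) :
    (specRad (Sgraph (m - k + 1) k) ^ 3 - specRad (Sgraph (m - k + 1) k) ^ 2
        - ((m : ℝ) - k) * specRad (Sgraph (m - k + 1) k) + ((m : ℝ) - 3 * k) = 0) ∧
    (∀ y : ℝ, y ^ 3 - y ^ 2 - ((m : ℝ) - k) * y + ((m : ℝ) - 3 * k) = 0 →
        y ≤ specRad (Sgraph (m - k + 1) k)) ∧
    Real.sqrt ((m : ℝ) - k) < specRad (Sgraph (m - k + 1) k) ∧
    specRad (Sgraph (m - k + 1) k) ≤ Real.sqrt ((m : ℝ) - k + 1) := by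
  have hkm' : k ≤ m := by omega
  set a := m - k with hadef
  have ha : 4*k^2 + 4*k ≤ a := by
    have h2 : 4*(k^2) + 5*k ≤ m := by linarith [hm]
    omega
  have hc1 : (m:ℝ) - (k:ℝ) = (a:ℝ) := by
    rw [hadef]; push_cast [Nat.cast_sub hkm']; ring
  have hc2 : (m:ℝ) - 3*(k:ℝ) = (a:ℝ) - 2*(k:ℝ) := by
    rw [← hc1]; ring
  obtain ⟨h1, h2, h3, h4⟩ := main_spec a k hk ha
  refine ⟨?_, ?_, ?_, ?_⟩
  · rw [hc1, hc2]; exact h1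
  · intro y hy
    rw [hc1, hc2] at hy
    exact h2 y hy
  · rw [hc1]; exact h3
  · rw [hc1]; exact h4
end

section
/- For integers t ≥ 1, r ≥ 1, let G_{14}(t,r) be the graph with vertex set {u, u_0, u_1, ..., u_r, w_1, ..., w_t} in which u is adjacent to every other vertex and u_0 is adjacent to each of u_1, ..., u_r, and with no other edges; G_{14}(t,r) has m = t + 2r + 1 edges. Then: (a) ρ(G_{14}(t,r)) is the largest real root of the polynomial x⁴ - m x² - (m-t-1)x + t(m-t-1)/2; and (b) if m ≥ 74 is even, then for every odd t with t ≥ 3 and r ≥ 1 satisfying m = t + 2r + 1, one has ρ(G_{14}(t,r)) < ρ(G_{14}(1,(m-2)/2)), where G_{14}(1,(m-2)/2) is isomorphic to S_{(m+4)/2,2}^-. -/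
open Matrix SimpleGraph
open scoped Classical

noncomputable def qpoly (t r : ℕ) (x : ℝ) : ℝ :=
  x^4 - ((t:ℝ)+2*r+1)*x^2 - 2*(r:ℝ)*x + (t:ℝ)*(r:ℝ)

lemma snk2m_adj (n : ℕ) (a b : Fin n) :
    (Snk2Minus n).Adj a b ↔ a.val ≠ b.val ∧ (a.val = 0 ∨ (a.val = 1 ∧ b.val ≠ 2)
      ∨ b.val = 0 ∨ (b.val = 1 ∧ a.val ≠ 2)) := by
  simp only [Snk2Minus, SimpleGraph.fromRel_adj, Ne, Fin.ext_iff]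
  tauto

lemma g14_adj (t r : ℕ) (a b : Fin (t+r+2)) :
    (G14 t r).Adj a b ↔ a.val ≠ b.val ∧ (a.val = 0 ∨ b.val = 0 ∨
      (a.val = 1 ∧ 2 ≤ b.val ∧ b.val ≤ r+1) ∨ (b.val = 1 ∧ 2 ≤ a.val ∧ a.val ≤ r+1)) := by
  simp only [G14, SimpleGraph.fromRel_adj, Ne, Fin.ext_iff]
  tauto

noncomputable def Mmat (t r : ℕ) (y : ℝ) : Matrix (Fin 4) (Fin 4) ℝ :=
  !![y, -1, -(r:ℝ), -(t:ℝ); -1, y, -(r:ℝ), 0; -1, -1, y, 0; -1, 0, 0, y]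

lemma det_M (t r : ℕ) (y : ℝ) : (Mmat t r y).det = qpoly t r y := by
  simp [Mmat, Matrix.det_succ_row_zero, Fin.sum_univ_succ, Fin.succAbove, qpoly]
  ring

lemma mulVec_M (t r : ℕ) (y : ℝ) (v : Fin 4 → ℝ) (h : Mmat t r y *ᵥ v = 0) :
    y * v 0 - v 1 - r * v 2 - t * v 3 = 0 ∧
    -v 0 + y * v 1 - r * v 2 = 0 ∧
    -v 0 - v 1 + y * v 2 = 0 ∧
    -v 0 + y * v 3 = 0 := by
  have h0 := congrFun h 0
  have h1 := congrFun h 1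
  have h2 := congrFun h 2
  have h3 := congrFun h 3
  simp [Mmat, Matrix.mulVec, dotProduct, Fin.sum_univ_four] at h0 h1 h2 h3
  refine ⟨by linarith, by linarith, by linarith, by linarith⟩

lemma card_filter_val (n : ℕ) (P : ℕ → Prop) [DecidablePred P] :
    (Finset.univ.filter (fun j : Fin n => P j.val)).card
      = ((Finset.range n).filter P).card := by
  apply Finset.card_bij (fun a _ => a.val)
  · intro a ha
    simp only [Finset.mem_filter, Finset.mem_univ, true_and] at ha
    simp [a.isLt, ha]
  · intro a _ b _ h
    exact Fin.ext h
  · intro b hb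
    simp only [Finset.mem_filter, Finset.mem_range] at hb
    exact ⟨⟨b, hb.1⟩, by simp [hb.2], rfl⟩

lemma card_mid (t r : ℕ) :
    (Finset.univ.filter fun j : Fin (t+r+2) => 2 ≤ j.val ∧ j.val ≤ r+1).card = r := by
  rw [card_filter_val (t+r+2) (fun v => 2 ≤ v ∧ v ≤ r+1)]
  have : ((Finset.range (t+r+2)).filter fun v => 2 ≤ v ∧ v ≤ r+1) = Finset.Ico 2 (r+2) := by
    ext v; simp [Finset.mem_Ico]; omega
  rw [this, Nat.card_Ico]; omega

lemma card_tail (t r : ℕ) :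
    (Finset.univ.filter fun j : Fin (t+r+2) => r+2 ≤ j.val).card = t := by
  rw [card_filter_val (t+r+2) (fun v => r+2 ≤ v)]
  have : ((Finset.range (t+r+2)).filter fun v => r+2 ≤ v) = Finset.Ico (r+2) (t+r+2) := by
    ext v; simp [Finset.mem_Ico]; omega
  rw [this, Nat.card_Ico]; omega

lemma sum_mid (t r : ℕ) (x : Fin (t+r+2) → ℝ) (c : ℝ)
    (hc : ∀ j : Fin (t+r+2), 2 ≤ j.val → j.val ≤ r+1 → x j = c) :
    ∑ j ∈ (Finset.univ.filter fun j : Fin (t+r+2) => 2 ≤ j.val ∧ j.val ≤ r+1), x j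
      = r * c := by
  rw [Finset.sum_congr rfl (fun j hj => by
    simp only [Finset.mem_filter] at hj; exact hc j hj.2.1 hj.2.2),
    Finset.sum_const, card_mid, nsmul_eq_mul]

lemma sum_tail (t r : ℕ) (x : Fin (t+r+2) → ℝ) (d : ℝ)
    (hd : ∀ j : Fin (t+r+2), r+2 ≤ j.val → x j = d) :
    ∑ j ∈ (Finset.univ.filter fun j : Fin (t+r+2) => r+2 ≤ j.val), x j = t * d := by
  rw [Finset.sum_congr rfl (fun j hj => by
    simp only [Finset.mem_filter] at hj; exact hd j hj.2),
    Finset.sum_const, card_tail, nsmul_eq_mul]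

lemma mulVec_tail (t r : ℕ) (x : Fin (t+r+2) → ℝ) (i : Fin (t+r+2)) (hi : r+2 ≤ i.val) :
    ((G14 t r).adjMatrix ℝ *ᵥ x) i = x ⟨0, by omega⟩ := by
  rw [SimpleGraph.adjMatrix_mulVec_apply]
  have h : (G14 t r).neighborFinset i = {⟨0, by omega⟩} := by
    ext j
    simp only [SimpleGraph.mem_neighborFinset, g14_adj, Finset.mem_singleton, Fin.ext_iff]
    omega
  rw [h, Finset.sum_singleton]

lemma mulVec_mid (t r : ℕ) (x : Fin (t+r+2) → ℝ) (i : Fin (t+r+2))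
    (h2 : 2 ≤ i.val) (h3 : i.val ≤ r+1) :
    ((G14 t r).adjMatrix ℝ *ᵥ x) i = x ⟨0, by omega⟩ + x ⟨1, by omega⟩ := by
  rw [SimpleGraph.adjMatrix_mulVec_apply]
  have h : (G14 t r).neighborFinset i = {⟨0, by omega⟩, ⟨1, by omega⟩} := by
    ext j
    simp only [SimpleGraph.mem_neighborFinset, g14_adj, Finset.mem_insert,
      Finset.mem_singleton, Fin.ext_iff]
    omega
  rw [h, Finset.sum_pair (by simp [Fin.ext_iff])]

lemma mulVec_one (t r : ℕ) (x : Fin (t+r+2) → ℝ) (c : ℝ)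
    (hc : ∀ j : Fin (t+r+2), 2 ≤ j.val → j.val ≤ r+1 → x j = c)
    (i : Fin (t+r+2)) (hi : i.val = 1) :
    ((G14 t r).adjMatrix ℝ *ᵥ x) i = x ⟨0, by omega⟩ + r * c := by
  rw [SimpleGraph.adjMatrix_mulVec_apply]
  have h : (G14 t r).neighborFinset i
      = insert ⟨0, by omega⟩ (Finset.univ.filter fun j : Fin (t+r+2) => 2 ≤ j.val ∧ j.val ≤ r+1) := by
    ext j
    simp only [SimpleGraph.mem_neighborFinset, g14_adj, Finset.mem_insert,
      Finset.mem_filter, Finset.mem_univ, true_and, Fin.ext_iff]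
    omega
  rw [h, Finset.sum_insert (by simp), sum_mid t r x c hc]

lemma mulVec_zero (t r : ℕ) (x : Fin (t+r+2) → ℝ) (c d : ℝ)
    (hc : ∀ j : Fin (t+r+2), 2 ≤ j.val → j.val ≤ r+1 → x j = c)
    (hd : ∀ j : Fin (t+r+2), r+2 ≤ j.val → x j = d)
    (i : Fin (t+r+2)) (hi : i.val = 0) :
    ((G14 t r).adjMatrix ℝ *ᵥ x) i = x ⟨1, by omega⟩ + r * c + t * d := by
  rw [SimpleGraph.adjMatrix_mulVec_apply]
  have h : (G14 t r).neighborFinset i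
      = insert ⟨1, by omega⟩
          ((Finset.univ.filter fun j : Fin (t+r+2) => 2 ≤ j.val ∧ j.val ≤ r+1)
            ∪ (Finset.univ.filter fun j : Fin (t+r+2) => r+2 ≤ j.val)) := by
    ext j
    simp only [SimpleGraph.mem_neighborFinset, g14_adj, Finset.mem_insert,
      Finset.mem_union, Finset.mem_filter, Finset.mem_univ, true_and, Fin.ext_iff]
    omega
  rw [h, Finset.sum_insert (by simp), Finset.sum_union (by
    rw [Finset.disjoint_left]
    intro j hj1 hj2
    simp only [Finset.mem_filter, Finset.mem_univ, true_and] at hj1 hj2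
    omega), sum_mid t r x c hc, sum_tail t r x d hd]
  ring

lemma eigen_of_root (t r : ℕ) (ht : 1 ≤ t) (hr : 1 ≤ r) (y : ℝ) (hy : qpoly t r y = 0) :
    ∃ x : Fin (t+r+2) → ℝ, x ≠ 0 ∧ (G14 t r).adjMatrix ℝ *ᵥ x = y • x := by
  obtain ⟨v, hv0, hv⟩ : ∃ v : Fin 4 → ℝ, v ≠ 0 ∧ Mmat t r y *ᵥ v = 0 := by
    have := (Matrix.exists_mulVec_eq_zero_iff (M := Mmat t r y)).2 (by rw [det_M]; exact hy)
    obtain ⟨v, hv0, hv⟩ := this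
    exact ⟨v, hv0, hv⟩
  obtain ⟨e0, e1, e2, e3⟩ := mulVec_M t r y v hv
  set x : Fin (t+r+2) → ℝ := fun j =>
    if j.val = 0 then v 0 else if j.val = 1 then v 1 else
    if j.val ≤ r+1 then v 2 else v 3 with hxdef
  have hc : ∀ j : Fin (t+r+2), 2 ≤ j.val → j.val ≤ r+1 → x j = v 2 := by
    intro j h2 h3; simp only [hxdef]
    rw [if_neg (by omega), if_neg (by omega), if_pos h3]
  have hd : ∀ j : Fin (t+r+2), r+2 ≤ j.val → x j = v 3 := by
    intro j h2; simp only [hxdef]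
    rw [if_neg (by omega), if_neg (by omega), if_neg (by omega)]
  refine ⟨x, ?_, ?_⟩
  · intro hx
    apply hv0
    funext i
    fin_cases i
    · have := congrFun hx ⟨0, by omega⟩; simpa [hxdef] using this
    · have := congrFun hx ⟨1, by omega⟩; simpa [hxdef] using this
    · have := congrFun hx ⟨2, by omega⟩
      simpa [hxdef, show ¬ (2:ℕ) = 0 by omega, show ¬ (2:ℕ) = 1 by omega,
        show 2 ≤ r+1 by omega] using this
    · have := congrFun hx ⟨r+2, by omega⟩
      simpa [hxdef, show ¬ (r+2:ℕ) = 0 by omega, show ¬ (r+2:ℕ) = 1 by omega,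
        show ¬ (r+2 ≤ r+1) by omega] using this
  · funext i
    have hx0 : x ⟨0, by omega⟩ = v 0 := by simp [hxdef]
    have hx1 : x ⟨1, by omega⟩ = v 1 := by simp [hxdef]
    rcases Nat.lt_or_ge i.val 1 with h | h
    · have hi : i.val = 0 := by omega
      rw [Pi.smul_apply, mulVec_zero t r x (v 2) (v 3) hc hd i hi, hx1]
      have hxi : x i = v 0 := by simp only [hxdef]; rw [if_pos hi]
      rw [hxi, smul_eq_mul]; linarith
    rcases Nat.lt_or_ge i.val 2 with h2 | h2
    · have hi : i.val = 1 := by omega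
      rw [Pi.smul_apply, mulVec_one t r x (v 2) hc i hi, hx0]
      have hxi : x i = v 1 := by simp only [hxdef]; rw [if_neg (by omega), if_pos hi]
      rw [hxi, smul_eq_mul]; linarith
    rcases Nat.lt_or_ge i.val (r+2) with h3 | h3
    · rw [Pi.smul_apply, mulVec_mid t r x i h2 (by omega), hx0, hx1]
      rw [hc i h2 (by omega), smul_eq_mul]; linarith
    · rw [Pi.smul_apply, mulVec_tail t r x i h3, hx0]
      rw [hd i h3, smul_eq_mul]; linarith

lemma root_of_eigen (t r : ℕ) (y : ℝ) (hy : y ≠ 0)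
    (x : Fin (t+r+2) → ℝ) (hx0 : x ≠ 0) (hx : (G14 t r).adjMatrix ℝ *ᵥ x = y • x) :
    qpoly t r y = 0 := by
  set a : ℝ := x ⟨0, by omega⟩ with ha
  set b : ℝ := x ⟨1, by omega⟩ with hb
  set c : ℝ := (a + b) / y with hcdef
  set d : ℝ := a / y with hddef
  have hc : ∀ j : Fin (t+r+2), 2 ≤ j.val → j.val ≤ r+1 → x j = c := by
    intro j h2 h3
    have := congrFun hx j
    rw [mulVec_mid t r x j h2 h3, Pi.smul_apply, smul_eq_mul] at this
    rw [hcdef]; field_simp; linarith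
  have hd : ∀ j : Fin (t+r+2), r+2 ≤ j.val → x j = d := by
    intro j h2
    have := congrFun hx j
    rw [mulVec_tail t r x j h2, Pi.smul_apply, smul_eq_mul] at this
    rw [hddef]; field_simp; linarith
  have e0 : y * a = b + r * c + t * d := by
    have := congrFun hx ⟨0, by omega⟩
    rw [mulVec_zero t r x c d hc hd ⟨0, by omega⟩ rfl, Pi.smul_apply, smul_eq_mul] at this
    linarith [this]
  have e1 : y * b = a + r * c := by
    have := congrFun hx ⟨1, by omega⟩
    rw [mulVec_one t r x c hc ⟨1, by omega⟩ rfl, Pi.smul_apply, smul_eq_mul] at this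
    linarith [this]
  have e2 : y * c = a + b := by rw [hcdef]; field_simp
  have e3 : y * d = a := by rw [hddef]; field_simp
  have hv0 : ![a, b, c, d] ≠ 0 := by
    intro hv
    apply hx0
    funext j
    have h0 : a = 0 := congrFun hv 0
    have h1 : b = 0 := congrFun hv 1
    have h2 : c = 0 := congrFun hv 2
    have h3 : d = 0 := congrFun hv 3
    rcases Nat.lt_or_ge j.val 1 with h | h
    · have : j = ⟨0, by omega⟩ := by apply Fin.ext; simp only [Fin.val_mk]; omega
      rw [this, ← ha, h0]; rfl
    rcases Nat.lt_or_ge j.val 2 with hh | hh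
    · have : j = ⟨1, by omega⟩ := by apply Fin.ext; simp only [Fin.val_mk]; omega
      rw [this, ← hb, h1]; rfl
    rcases Nat.lt_or_ge j.val (r+2) with h3' | h3'
    · rw [hc j hh (by omega), h2]; rfl
    · rw [hd j h3', h3]; rfl
  have hdet : (Mmat t r y).det = 0 := by
    rw [← Matrix.exists_mulVec_eq_zero_iff]
    refine ⟨![a, b, c, d], hv0, ?_⟩
    funext i
    fin_cases i <;>
      simp [Mmat, Matrix.mulVec, dotProduct, Fin.sum_univ_four] <;> linarith
  rw [det_M] at hdet
  exact hdet

set_option maxHeartbeats 1000000 in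
lemma key (t r : ℕ) (ht : 1 ≤ t) (hr : 1 ≤ r) :
    0 < specRad (G14 t r) ∧ qpoly t r (specRad (G14 t r)) = 0 ∧
      ∀ y : ℝ, qpoly t r y = 0 → y ≤ specRad (G14 t r) := by
  classical
  set E : Set ℝ := {y : ℝ | ∃ x : Fin (t+r+2) → ℝ, x ≠ 0 ∧ (G14 t r).adjMatrix ℝ *ᵥ x = y • x}
    with hE
  have hspec : specRad (G14 t r) = sSup E := rfl
  -- polynomial and finiteness
  set p : Polynomial ℝ := Polynomial.X^4 - Polynomial.C ((t:ℝ)+2*r+1) * Polynomial.X^2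
      - Polynomial.C (2*(r:ℝ)) * Polynomial.X + Polynomial.C ((t:ℝ)*(r:ℝ)) with hp
  have hpev : ∀ y : ℝ, p.eval y = qpoly t r y := by
    intro y; simp [hp, qpoly]; try ring
  have hpne : p ≠ 0 := by
    intro h
    have h0 : p.eval 0 = 0 := by rw [h]; simp
    rw [hpev 0] at h0
    simp [qpoly] at h0
    have ht' : (1:ℝ) ≤ t := by exact_mod_cast ht
    have hr' : (1:ℝ) ≤ r := by exact_mod_cast hr
    rcases h0 with h0 | h0 <;> linarith
  have hfin : E.Finite := by
    apply Set.Finite.subset ((Polynomial.finite_setOf_isRoot hpne).insert 0)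
    intro y hy
    rcases eq_or_ne y 0 with h | h
    · exact Set.mem_insert_iff.2 (Or.inl h)
    · obtain ⟨x, hx0, hx⟩ := hy
      refine Set.mem_insert_iff.2 (Or.inr ?_)
      show p.eval y = 0
      rw [hpev]
      exact root_of_eigen t r y h x hx0 hx
  -- root location via IVT
  have ht' : (1:ℝ) ≤ t := by exact_mod_cast ht
  have hr' : (1:ℝ) ≤ r := by exact_mod_cast hr
  set m : ℝ := (t:ℝ)+2*r+1 with hm
  have hmpos : 0 < m := by positivity
  have hinner : 0 ≤ m^2 - 4*t*r := by nlinarith [sq_nonneg ((t:ℝ) - 2*r)]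
  set w : ℝ := Real.sqrt (m^2 - 4*t*r) with hw
  have hw2 : w^2 = m^2 - 4*t*r := Real.sq_sqrt hinner
  have hwnn : 0 ≤ w := Real.sqrt_nonneg _
  have hwm : w ≤ m := by nlinarith
  set z : ℝ := (m + w)/2 with hz
  have hznn : 0 < z := by positivity
  set s : ℝ := Real.sqrt z with hs
  have hs2 : s^2 = z := Real.sq_sqrt hznn.le
  have hspos : 0 < s := Real.sqrt_pos.2 hznn
  have hqs : qpoly t r s < 0 := by
    have h4 : s^4 = z^2 := by rw [show s^4 = (s^2)^2 by ring, hs2]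
    have : qpoly t r s = -2*r*s := by
      simp only [qpoly, ← hm, h4, hs2]
      rw [hz]
      nlinarith [hw2]
    rw [this]
    nlinarith
  have hsm : s ≤ m + 1 := by nlinarith
  have hqX : 0 < qpoly t r (m+1) := by
    simp only [qpoly, ← hm]
    nlinarith [sq_nonneg (m+1), hmpos]
  obtain ⟨y₀, hy₀mem, hy₀⟩ : ∃ y₀ ∈ Set.Icc s (m+1), qpoly t r y₀ = 0 := by
    have hcont : ContinuousOn (fun x : ℝ => qpoly t r x) (Set.Icc s (m+1)) := by
      apply Continuous.continuousOn
      simp only [qpoly]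
      fun_prop
    have := intermediate_value_Icc hsm hcont
    have h0mem : (0:ℝ) ∈ Set.Icc (qpoly t r s) (qpoly t r (m+1)) := ⟨hqs.le, hqX.le⟩
    obtain ⟨y₀, hy₀, hy₀'⟩ := this h0mem
    exact ⟨y₀, hy₀, hy₀'⟩
  have hy₀pos : 0 < y₀ := lt_of_lt_of_le hspos hy₀mem.1
  have hy₀E : y₀ ∈ E := eigen_of_root t r ht hr y₀ hy₀
  have hEne : E.Nonempty := ⟨y₀, hy₀E⟩
  have hbdd : BddAbove E := hfin.bddAbove
  have hsupmem : sSup E ∈ E := hEne.csSup_mem hfin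
  have hsuppos : 0 < sSup E := lt_of_lt_of_le hy₀pos (le_csSup hbdd hy₀E)
  refine ⟨by rw [hspec]; exact hsuppos, ?_, ?_⟩
  · rw [hspec]
    obtain ⟨x, hx0, hx⟩ := hsupmem
    exact root_of_eigen t r _ (ne_of_gt hsuppos) x hx0 hx
  · intro y hy
    rw [hspec]
    exact le_csSup hbdd (eigen_of_root t r ht hr y hy)


set_option maxHeartbeats 1000000 in
lemma partb_lt (t r r' : ℕ) (ht3 : 3 ≤ t) (hr : 1 ≤ r)
    (h : t + 2*r = 2*r' + 1) : specRad (G14 t r) < specRad (G14 1 r') := by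
  have ht : 1 ≤ t := le_trans (by norm_num) ht3
  have hr1 : 1 ≤ r' := by omega
  have hkey := key t r ht hr
  have hkey' := key 1 r' (le_refl 1) hr1
  set ρ : ℝ := specRad (G14 t r) with hρdef
  set ρ' : ℝ := specRad (G14 1 r') with hρ'def
  have hρpos : 0 < ρ := hkey.1
  have hρroot : qpoly t r ρ = 0 := hkey.2.1
  have hmax' : ∀ y : ℝ, qpoly 1 r' y = 0 → y ≤ ρ' := hkey'.2.2
  have ht3' : (3:ℝ) ≤ (t:ℝ) := by exact_mod_cast ht3
  have hr1' : (1:ℝ) ≤ (r:ℝ) := by exact_mod_cast hr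
  have h2r' : 2*(r':ℝ) = (t:ℝ) + 2*(r:ℝ) - 1 := by
    have : ((t + 2*r : ℕ):ℝ) = ((2*r' + 1 : ℕ):ℝ) := by rw [h]
    push_cast at this; linarith
  set M : ℝ := (t:ℝ) + 2*(r:ℝ) + 1 with hM
  have hMpos : (0:ℝ) < M := by rw [hM]; linarith
  have hq1neg : qpoly 1 r' ρ < 0 := by
    have hρroot' : ρ^4 - ((t:ℝ)+2*(r:ℝ)+1)*ρ^2 - 2*(r:ℝ)*ρ + (t:ℝ)*(r:ℝ) = 0 := by
      simpa only [qpoly] using hρroot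
    have hq1eq : qpoly 1 r' ρ
        = (1-(t:ℝ))*ρ + (((t:ℝ)+2*(r:ℝ)-1)/2 - (t:ℝ)*(r:ℝ)) := by
      simp only [qpoly]
      push_cast
      linear_combination hρroot' + (-ρ^2 - ρ + 1/2) * h2r'
    rw [hq1eq]
    nlinarith [mul_pos (show (0:ℝ) < (t:ℝ)-1 by linarith) hρpos,
      mul_nonneg (show (0:ℝ) ≤ 2*(r:ℝ)-1 by linarith) (show (0:ℝ) ≤ (t:ℝ)-1 by linarith)]
  by_contra hlt
  push_neg at hlt
  set X : ℝ := ρ + M + 1 with hX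
  have hXge : M + 1 ≤ X := by rw [hX]; linarith
  have hXpos : 0 < X := by linarith
  have hρX : ρ ≤ X := by rw [hX]; linarith
  have hqX : 0 < qpoly 1 r' X := by
    have h2r'' : 2*(r':ℝ) = M - 2 := by rw [hM]; linarith
    have hX2 : (M+1)*X ≤ X^2 := by nlinarith
    have hX4 : (M+1)^2*X^2 ≤ X^4 := by
      nlinarith [mul_nonneg (sub_nonneg.2 hX2)
        (show (0:ℝ) ≤ X^2 + (M+1)*X by positivity)]
    have hC : (M^2+M+1)*((M+1)*X) ≤ (M^2+M+1)*X^2 :=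
      mul_le_mul_of_nonneg_left hX2 (by positivity)
    have hMX : (0:ℝ) ≤ M*X := by positivity
    have hM2X : (0:ℝ) ≤ M^2*X := by positivity
    have hM3X : (0:ℝ) ≤ M^3*X := by positivity
    have hr'0 : (0:ℝ) ≤ (r':ℝ) := by positivity
    have e1 : (1+2*(r':ℝ)+1)*X^2 = M*X^2 := by linear_combination X^2 * h2r''
    have e2 : 2*(r':ℝ)*X = (M-2)*X := by linear_combination X * h2r''
    have hgoal : (0:ℝ) < X^4 - (1+2*(r':ℝ)+1)*X^2 - 2*(r':ℝ)*X + 1*(r':ℝ) := by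
      nlinarith [hX4, hC, hMX, hM2X, hM3X, hr'0, hXpos, e1, e2]
    simpa only [qpoly, Nat.cast_one] using hgoal
  obtain ⟨c, hcmem, hc⟩ : ∃ c ∈ Set.Icc ρ X, qpoly 1 r' c = 0 := by
    have hcont : ContinuousOn (fun x : ℝ => qpoly 1 r' x) (Set.Icc ρ X) := by
      apply Continuous.continuousOn
      simp only [qpoly]
      fun_prop
    have h0mem : (0:ℝ) ∈ Set.Icc (qpoly 1 r' ρ) (qpoly 1 r' X) := ⟨hq1neg.le, hqX.le⟩
    obtain ⟨c, hcm, hc'⟩ := intermediate_value_Icc hρX hcont h0mem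
    exact ⟨c, hcm, hc'⟩
  have hcρ : c = ρ := le_antisymm (le_trans (hmax' c hc) hlt) hcmem.1
  rw [hcρ] at hc
  linarith

set_option maxHeartbeats 1000000 in
lemma partb_iso (r' n : ℕ) (hr1 : 1 ≤ r') (hcard : 1 + r' + 2 = n) :
    Nonempty (G14 1 r' ≃g Snk2Minus n) := by
  set σ : Fin (1+r'+2) ≃ Fin (1+r'+2) :=
    Equiv.swap ⟨2, by omega⟩ ⟨r'+2, by omega⟩ with hσ
  set e : Fin (1+r'+2) ≃ Fin n := σ.trans (finCongr hcard) with he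
  have hs : ∀ a : Fin (1+r'+2), (e a).val
      = if a.val = 2 then r'+2 else if a.val = r'+2 then 2 else a.val := by
    intro a
    by_cases h1 : a = (⟨2, by omega⟩ : Fin (1+r'+2))
    · subst h1
      simp only [he, hσ, Equiv.trans_apply, Equiv.swap_apply_left, finCongr_apply,
        Fin.coe_cast, Fin.val_mk]
      split_ifs <;> omega
    · by_cases h2 : a = (⟨r'+2, by omega⟩ : Fin (1+r'+2))
      · subst h2
        simp only [he, hσ, Equiv.trans_apply, Equiv.swap_apply_right, finCongr_apply,
          Fin.coe_cast, Fin.val_mk]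
        split_ifs <;> omega
      · simp only [he, hσ, Equiv.trans_apply, Equiv.swap_apply_of_ne_of_ne h1 h2,
          finCongr_apply, Fin.coe_cast]
        split_ifs with hh1 hh2
        · exact absurd (Fin.ext hh1) h1
        · exact absurd (Fin.ext hh2) h2
        · rfl
  refine ⟨RelIso.mk e ?_⟩
  intro a b
  have hsa := hs a
  have hsb := hs b
  have ha := a.isLt
  have hb := b.isLt
  rw [snk2m_adj, g14_adj]
  split_ifs at hsa hsb <;> omega

set_option maxHeartbeats 1000000 in
/-- (a) `ρ(G₁₄(t,r))` is the largest real root of `x⁴ - m x² - (m-t-1)x + t(m-t-1)/2`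
where `m = t + 2r + 1`; (b) if `m ≥ 74` is even, then for every odd `t ≥ 3`,
`ρ(G₁₄(t,r)) < ρ(G₁₄(1,(m-2)/2))`, and `G₁₄(1,(m-2)/2) ≅ S_{(m+4)/2,2}^-`. -/
theorem stmt7 (t r : ℕ) (ht : 1 ≤ t) (hr : 1 ≤ r) (m : ℕ)
    (hm : m = t + 2 * r + 1) :
    ((specRad (G14 t r) ^ 4 - (m : ℝ) * specRad (G14 t r) ^ 2
        - ((m : ℝ) - t - 1) * specRad (G14 t r)
        + (t : ℝ) * ((m : ℝ) - t - 1) / 2 = 0) ∧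
      (∀ y : ℝ, y ^ 4 - (m : ℝ) * y ^ 2 - ((m : ℝ) - t - 1) * y
          + (t : ℝ) * ((m : ℝ) - t - 1) / 2 = 0 → y ≤ specRad (G14 t r))) ∧
    (74 ≤ m → Even m → Odd t → 3 ≤ t →
      specRad (G14 t r) < specRad (G14 1 ((m - 2) / 2)) ∧
      Nonempty (G14 1 ((m - 2) / 2) ≃g Snk2Minus ((m + 4) / 2))) := by
  have hkey := key t r ht hr
  have hmr : (m:ℝ) = (t:ℝ) + 2*r + 1 := by rw [hm]; push_cast; ring
  have hpolyeq : ∀ y : ℝ, y^4 - (m:ℝ)*y^2 - ((m:ℝ)-t-1)*y + (t:ℝ)*((m:ℝ)-t-1)/2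
      = qpoly t r y := by
    intro y; simp only [qpoly]; rw [hmr]; ring
  refine ⟨⟨by rw [hpolyeq]; exact hkey.2.1, fun y hy => by
      rw [hpolyeq] at hy; exact hkey.2.2 y hy⟩, ?_⟩
  intro h74 hme hto ht3
  have hfacts : t + 2*r = 2*((m-2)/2) + 1 ∧ 1 ≤ (m-2)/2 ∧ 1 + (m-2)/2 + 2 = (m+4)/2 := by
    obtain ⟨k, hk⟩ := hme; omega
  exact ⟨partb_lt t r ((m-2)/2) ht3 hr hfacts.1,
    partb_iso ((m-2)/2) ((m+4)/2) hfacts.2.1 hfacts.2.2⟩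
end

section
/- Let G be a connected C_4-free graph of size m with ρ(G) ≥ 7, let X be a Perron vector of G and u* an extremal vertex. Then ρ(G)² ≤ m - (2/3)(e(N_1(u*)) + e(W)), where e(N_1(u*)) is the number of edges of G with both ends in N_1(u*) and e(W) the number of edges with both ends in W = V(G) \ N[u*]. -/
open Matrix SimpleGraph
open scoped Classical

section aux
variable {V : Type*} [Fintype V] (G : SimpleGraph V)

lemma aux_swap (S T : Finset V) (f : V → ℝ) :
    ∑ v ∈ S, ∑ w ∈ G.neighborFinset v ∩ T, f w
      = ∑ w ∈ T, ((G.neighborFinset w ∩ S).card : ℝ) * f w := by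
  have h1 : ∀ v : V, G.neighborFinset v ∩ T = T.filter (fun w => G.Adj v w) := by
    intro v; ext w; simp [Finset.mem_filter, and_comm]
  simp_rw [h1, Finset.sum_filter]
  rw [Finset.sum_comm]
  refine Finset.sum_congr rfl fun w _ => ?_
  have h2 : G.neighborFinset w ∩ S = S.filter (fun v => G.Adj v w) := by
    ext v; simp [Finset.mem_filter, and_comm, G.adj_comm]
  rw [h2, Finset.card_filter]
  push_cast
  rw [Finset.sum_mul]
  refine Finset.sum_congr rfl fun v _ => ?_
  split <;> simp

lemma aux_swapCount (S T : Finset V) :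
    ∑ v ∈ S, ((G.neighborFinset v ∩ T).card : ℝ)
      = ∑ w ∈ T, ((G.neighborFinset w ∩ S).card : ℝ) := by
  have := aux_swap G S T (fun _ => 1)
  simpa using this

lemma aux_handshake (S : Set V) (Sf : Finset V) (hSf : ↑Sf = S) :
    2 * eIn G S = ∑ v ∈ Sf, (G.neighborFinset v ∩ Sf).card := by
  classical
  let GS : SimpleGraph V :=
    { Adj := fun a b => G.Adj a b ∧ a ∈ Sf ∧ b ∈ Sf
      symm := ⟨by rintro a b ⟨h, ha, hb⟩; exact ⟨h.symm, hb, ha⟩⟩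
      loopless := ⟨by rintro a ⟨h, -⟩; exact G.irrefl h⟩ }
  have hedge : {e ∈ G.edgeSet | ∀ v ∈ e, v ∈ S} = GS.edgeSet := by
    ext e
    refine Sym2.ind (fun a b => ?_) e
    simp only [Set.mem_setOf_eq, SimpleGraph.mem_edgeSet, Sym2.mem_iff, ← hSf,
      Finset.mem_coe]
    constructor
    · rintro ⟨hab, hmem⟩
      exact ⟨hab, hmem a (Or.inl rfl), hmem b (Or.inr rfl)⟩
    · rintro ⟨hab, ha, hb⟩
      refine ⟨hab, ?_⟩
      rintro v (rfl | rfl) <;> assumption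
  have h1 : eIn G S = GS.edgeFinset.card := by
    rw [eIn, hedge, ← SimpleGraph.coe_edgeFinset, Set.ncard_coe_finset]
  have h2 := GS.sum_degrees_eq_twice_card_edges
  have hdeg : ∀ v : V, GS.degree v = if v ∈ Sf then (G.neighborFinset v ∩ Sf).card else 0 := by
    intro v
    by_cases hv : v ∈ Sf
    · rw [if_pos hv]
      have hns : GS.neighborFinset v = G.neighborFinset v ∩ Sf := by
        ext w; simp [SimpleGraph.mem_neighborFinset, GS, hv]
      rw [SimpleGraph.degree, hns]
    · rw [if_neg hv]
      rw [SimpleGraph.degree, Finset.card_eq_zero]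
      ext w
      simp [SimpleGraph.mem_neighborFinset, GS, hv]
  rw [h1, ← h2]
  simp_rw [hdeg]
  rw [Finset.sum_ite_mem, Finset.univ_inter]

lemma common_nbr_le_one
    (hfree : ¬ ContainsSub (cycG 4) G) {v w : V} (hvw : v ≠ w) :
    (G.neighborFinset v ∩ G.neighborFinset w).card ≤ 1 := by
  by_contra h
  push_neg at h
  obtain ⟨z1, hz1, z2, hz2, hz12⟩ := Finset.one_lt_card.mp h
  simp only [Finset.mem_inter, SimpleGraph.mem_neighborFinset] at hz1 hz2
  apply hfree
  refine ⟨⟨![v, z1, w, z2], ?_⟩, ?_⟩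
  · intro a b hab
    fin_cases a <;> fin_cases b <;>
      simp_all [Matrix.cons_val_zero, Matrix.cons_val_one] <;>
      first
        | rfl
        | (exact absurd hab (by simp_all [eq_comm, hz1.1.ne', hz1.2.ne', hz2.1.ne', hz2.2.ne']))
  · intro a b hab
    fin_cases a <;> fin_cases b <;>
      simp_all [cycG, SimpleGraph.fromRel_adj] <;>
      first
        | exact absurd hab (by decide)
        | exact hz1.1 | exact hz1.1.symm | exact hz1.2 | exact hz1.2.symm
        | exact hz2.1 | exact hz2.1.symm | exact hz2.2 | exact hz2.2.symm

lemma ncard_common (v w : V) :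
    (G.neighborSet v ∩ G.neighborSet w).ncard
      = (G.neighborFinset v ∩ G.neighborFinset w).card := by
  rw [← Set.ncard_coe_finset]
  congr 1
  simp [Set.ext_iff]

lemma mem_N1set_iff (u v : V) :
    v ∈ N1set G u ↔ G.Adj u v ∧ (G.neighborFinset v ∩ G.neighborFinset u).card = 1 := by
  rw [N1set, Set.mem_setOf_eq, ncard_common]

lemma eIn_N1_eq (hfree : ¬ ContainsSub (cycG 4) G) (u : V) :
    eIn G (N1set G u) = eIn G (G.neighborSet u) := by
  unfold eIn
  congr 1
  ext e
  refine Sym2.ind (fun a b => ?_) e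
  simp only [Set.mem_setOf_eq, SimpleGraph.mem_edgeSet, Sym2.mem_iff]
  constructor
  · rintro ⟨hab, hmem⟩
    refine ⟨hab, fun v hv => ?_⟩
    exact ((mem_N1set_iff G u v).mp (hmem v hv)).1
  · rintro ⟨hab, hmem⟩
    have ha : G.Adj u a := hmem a (Or.inl rfl)
    have hb : G.Adj u b := hmem b (Or.inr rfl)
    refine ⟨hab, ?_⟩
    have key : ∀ p q : V, G.Adj u p → G.Adj u q → G.Adj p q → p ∈ N1set G u := by
      intro p q hp hq hpq
      rw [mem_N1set_iff]
      refine ⟨hp, le_antisymm (common_nbr_le_one G hfree hp.ne') ?_⟩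
      rw [Nat.one_le_iff_ne_zero, ← Nat.pos_iff_ne_zero, Finset.card_pos]
      exact ⟨q, by simp [SimpleGraph.mem_neighborFinset, hpq, hq]⟩
    rintro v (rfl | rfl)
    · exact key v b ha hb hab
    · exact key v a hb ha hab.symm

end aux

/-- For a connected `C_4`-free graph of size `m` with `ρ(G) ≥ 7`, Perron vector `x`
and extremal vertex `u`: `ρ(G)² ≤ m - (2/3)(e(N_1(u)) + e(W))`. -/
theorem stmt8 {V : Type*} [Fintype V] (G : SimpleGraph V) (m : ℕ)
    (hconn : G.Connected) (hfree : ¬ ContainsSub (cycG 4) G)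
    (hsize : G.edgeSet.ncard = m) (hρ : (7 : ℝ) ≤ specRad G)
    (x : V → ℝ) (hx : IsPerronVector G x) (u : V) (hu : ∀ v, x v ≤ x u) :
    specRad G ^ 2 ≤ (m : ℝ) - (2 / 3) * ((eIn G (N1set G u) : ℝ) + (eIn G (Wset G u) : ℝ)) := by
  classical
  set ρ := specRad G with hρdef
  have hx0 : ∀ v, 0 < x v := hx.1
  have hxu : 0 < x u := hx0 u
  -- eigen equation
  have heig : ∀ v, ∑ w ∈ G.neighborFinset v, x w = ρ * x v := by
    intro v
    have := congrFun hx.2 v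
    rw [SimpleGraph.adjMatrix_mulVec_apply] at this
    simpa using this
  -- the three parts of the vertex set
  set Nf := G.neighborFinset u with hNf
  set Wf := Finset.univ.filter (fun w => w ≠ u ∧ ¬ G.Adj u w) with hWf
  have hWfcoe : (↑Wf : Set V) = Wset G u := by
    ext w; simp [hWf, Wset]
  have hNfcoe : (↑Nf : Set V) = G.neighborSet u := by
    ext w; simp [hNf]
  -- partition lemma
  have sum3 : ∀ (T : Finset V) (f : V → ℝ),
      ∑ w ∈ T, f w = ∑ w ∈ T ∩ {u}, f w + ∑ w ∈ T ∩ Nf, f w + ∑ w ∈ T ∩ Wf, f w := by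
    intro T f
    have e1 : T ∩ {u} = T.filter (fun w => w = u) := by
      ext w; simp [Finset.mem_filter]
    have e2 : T ∩ Nf = T.filter (fun w => G.Adj u w) := by
      ext w; simp [hNf, Finset.mem_filter]
    have e3 : T ∩ Wf = T.filter (fun w => w ≠ u ∧ ¬ G.Adj u w) := by
      ext w; simp [hWf, Finset.mem_filter]
    rw [e1, e2, e3, Finset.sum_filter, Finset.sum_filter, Finset.sum_filter,
      ← Finset.sum_add_distrib, ← Finset.sum_add_distrib]
    refine Finset.sum_congr rfl fun w _ => ?_
    by_cases h1 : w = u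
    · subst h1; simp [G.irrefl]
    · by_cases h2 : G.Adj u w <;> simp [h1, h2]
  -- edge counts
  set EN : ℝ := (eIn G (N1set G u) : ℝ) with hEN
  set EW : ℝ := (eIn G (Wset G u) : ℝ) with hEW
  have heN : ∑ v ∈ Nf, ((G.neighborFinset v ∩ Nf).card : ℝ) = 2 * EN := by
    rw [hEN, eIn_N1_eq G hfree u]
    have h := congrArg (Nat.cast : ℕ → ℝ) (aux_handshake G (G.neighborSet u) Nf hNfcoe)
    push_cast at h
    linarith
  have heW : ∑ v ∈ Wf, ((G.neighborFinset v ∩ Wf).card : ℝ) = 2 * EW := by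
    have h := congrArg (Nat.cast : ℕ → ℝ) (aux_handshake G (Wset G u) Wf hWfcoe)
    push_cast at h
    rw [hEW]
    linarith
  set BW : ℝ := ∑ w ∈ Wf, ((G.neighborFinset w ∩ Nf).card : ℝ) with hBW
  set DD : ℝ := (Nf.card : ℝ) with hDD
  -- m identity
  have hm : (m : ℝ) = DD + EN + BW + EW := by
    have hm2 : (2 : ℝ) * m = ∑ v, (G.degree v : ℝ) := by
      have h1 := G.sum_degrees_eq_twice_card_edges
      have h2 : G.edgeFinset.card = m := by
        rw [← hsize, ← Set.ncard_coe_finset, SimpleGraph.coe_edgeFinset]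
      have h3 := congrArg (Nat.cast : ℕ → ℝ) h1
      push_cast at h3
      rw [← h2, h3]
    have hdv : ∀ v, (G.degree v : ℝ)
        = ((G.neighborFinset v ∩ {u}).card : ℝ) + ((G.neighborFinset v ∩ Nf).card : ℝ)
          + ((G.neighborFinset v ∩ Wf).card : ℝ) := by
      intro v
      have h := sum3 (G.neighborFinset v) (fun _ => (1 : ℝ))
      simp only [Finset.sum_const, nsmul_eq_mul, mul_one] at h
      rw [SimpleGraph.degree]
      exact h
    have hsum1 : ∑ v, ((G.neighborFinset v ∩ {u}).card : ℝ) = DD := by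
      rw [aux_swapCount G Finset.univ {u}, Finset.sum_singleton, Finset.inter_univ,
        hDD, hNf]
    have huniv : ∀ f : V → ℝ, ∑ v, f v = f u + ∑ v ∈ Nf, f v + ∑ v ∈ Wf, f v := by
      intro f
      have := sum3 Finset.univ f
      simpa [Finset.univ_inter] using this
    have hNuNf : G.neighborFinset u ∩ Nf = Nf := by rw [hNf, Finset.inter_self]
    have hNuWf : G.neighborFinset u ∩ Wf = ∅ := by
      ext w; simp [hWf]; tauto
    have hsum2 : ∑ v, ((G.neighborFinset v ∩ Nf).card : ℝ) = DD + 2 * EN + BW := by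
      rw [huniv, hNuNf, heN]
    have hBW' : ∑ v ∈ Nf, ((G.neighborFinset v ∩ Wf).card : ℝ) = BW := by
      rw [aux_swapCount G Nf Wf, hBW]
    have hsum3 : ∑ v, ((G.neighborFinset v ∩ Wf).card : ℝ) = BW + 2 * EW := by
      rw [huniv, hNuWf, hBW', heW]
      norm_num
    have : (2 : ℝ) * m = DD + (DD + 2 * EN + BW) + (BW + 2 * EW) := by
      rw [hm2]
      simp_rw [hdv]
      rw [Finset.sum_add_distrib, Finset.sum_add_distrib, hsum1, hsum2, hsum3]
    linarith
  -- spectral decomposition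
  set P2 : ℝ := ∑ w ∈ Nf, ((G.neighborFinset w ∩ Nf).card : ℝ) * x w with hP2
  set P3 : ℝ := ∑ w ∈ Wf, ((G.neighborFinset w ∩ Nf).card : ℝ) * x w with hP3
  have hinterU : ∀ v ∈ Nf, G.neighborFinset v ∩ {u} = {u} := by
    intro v hv
    rw [hNf, SimpleGraph.mem_neighborFinset] at hv
    apply Finset.inter_singleton_of_mem
    rw [SimpleGraph.mem_neighborFinset]
    exact hv.symm
  have hmain : ρ ^ 2 * x u = DD * x u + P2 + P3 := by
    have e1 : ρ ^ 2 * x u = ∑ v ∈ Nf, ∑ w ∈ G.neighborFinset v, x w := by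
      have : ρ ^ 2 * x u = ρ * (ρ * x u) := by ring
      rw [this, ← heig u, ← hNf, Finset.mul_sum]
      exact Finset.sum_congr rfl fun v _ => (heig v).symm
    rw [e1]
    have e2 : ∀ v ∈ Nf, ∑ w ∈ G.neighborFinset v, x w
        = x u + ∑ w ∈ G.neighborFinset v ∩ Nf, x w + ∑ w ∈ G.neighborFinset v ∩ Wf, x w := by
      intro v hv
      rw [sum3 (G.neighborFinset v) x, hinterU v hv, Finset.sum_singleton]
    rw [Finset.sum_congr rfl e2, Finset.sum_add_distrib, Finset.sum_add_distrib,
      Finset.sum_const, aux_swap G Nf Nf x, aux_swap G Nf Wf x]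
    rw [hP2, hP3, hDD]
    push_cast
    ring
  -- bound on P2
  have haC1 : ∀ w : V, w ≠ u → ((G.neighborFinset w ∩ Nf).card ≤ 1) := by
    intro w hw
    exact common_nbr_le_one G hfree hw
  set N1f := Nf.filter (fun w => (G.neighborFinset w ∩ Nf).card = 1) with hN1f
  have hP2N1 : P2 = ∑ w ∈ N1f, x w := by
    rw [hN1f, Finset.sum_filter, hP2]
    refine Finset.sum_congr rfl fun w hw => ?_
    have hwne : w ≠ u := by
      rw [hNf, SimpleGraph.mem_neighborFinset] at hw
      exact hw.ne'
    rcases Nat.le_one_iff_eq_zero_or_eq_one.mp (haC1 w hwne) with h | h <;> simp [h]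
  have hP2pos : 0 ≤ P2 := by
    rw [hP2N1]
    exact Finset.sum_nonneg fun w _ => (hx0 w).le
  have hP3pos : 0 ≤ P3 := by
    rw [hP3]
    exact Finset.sum_nonneg fun w _ => mul_nonneg (Nat.cast_nonneg _) (hx0 w).le
  have hcard_mono : ∀ (z : V) (S T : Finset V), S ⊆ T →
      ((G.neighborFinset z ∩ S).card : ℝ) ≤ ((G.neighborFinset z ∩ T).card : ℝ) := by
    intro z S T hST
    exact_mod_cast Finset.card_le_card (Finset.inter_subset_inter le_rfl hST)
  have hN1sub : N1f ⊆ Nf := Finset.filter_subset _ _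
  have hρP2 : ρ * P2 ≤ 2 * EN * x u + P2 + P3 := by
    have e1 : ρ * P2 = ∑ w ∈ N1f, ∑ z ∈ G.neighborFinset w, x z := by
      rw [hP2N1, Finset.mul_sum]
      exact Finset.sum_congr rfl fun w _ => (heig w).symm
    have e2 : ∀ w ∈ N1f, ∑ z ∈ G.neighborFinset w, x z
        = x u + ∑ z ∈ G.neighborFinset w ∩ Nf, x z + ∑ z ∈ G.neighborFinset w ∩ Wf, x z := by
      intro w hw
      rw [sum3 (G.neighborFinset w) x, hinterU w (hN1sub hw), Finset.sum_singleton]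
    rw [e1, Finset.sum_congr rfl e2, Finset.sum_add_distrib, Finset.sum_add_distrib,
      Finset.sum_const, aux_swap G N1f Nf x, aux_swap G N1f Wf x]
    have hcardN1 : (N1f.card : ℝ) ≤ 2 * EN := by
      rw [← heN]
      have : (N1f.card : ℝ) = ∑ w ∈ N1f, ((G.neighborFinset w ∩ Nf).card : ℝ) := by
        rw [Finset.card_eq_sum_ones]
        push_cast
        refine Finset.sum_congr rfl fun w hw => ?_
        rw [hN1f, Finset.mem_filter] at hw
        rw [hw.2]
        norm_num
      rw [this]
      refine Finset.sum_le_sum_of_subset_of_nonneg hN1sub fun w _ _ => Nat.cast_nonneg _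
    have b1 : (N1f.card : ℝ) * x u ≤ 2 * EN * x u :=
      mul_le_mul_of_nonneg_right hcardN1 hxu.le
    have b2 : ∑ z ∈ Nf, ((G.neighborFinset z ∩ N1f).card : ℝ) * x z ≤ P2 := by
      rw [hP2]
      exact Finset.sum_le_sum fun z _ =>
        mul_le_mul_of_nonneg_right (hcard_mono z N1f Nf hN1sub) (hx0 z).le
    have b3 : ∑ z ∈ Wf, ((G.neighborFinset z ∩ N1f).card : ℝ) * x z ≤ P3 := by
      rw [hP3]
      exact Finset.sum_le_sum fun z _ =>
        mul_le_mul_of_nonneg_right (hcard_mono z N1f Nf hN1sub) (hx0 z).le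
    have hns : (N1f.card : ℕ) • x u = (N1f.card : ℝ) * x u := nsmul_eq_mul _ _
    rw [hns]
    linarith
  -- bound on P3
  have hWfne : ∀ w ∈ Wf, w ≠ u := by
    intro w hw; rw [hWf, Finset.mem_filter] at hw; exact hw.2.1
  have h7P3 : 7 * P3 ≤ BW * x u + 2 * EW * x u := by
    have key : ∀ w ∈ Wf, 7 * (((G.neighborFinset w ∩ Nf).card : ℝ) * x w)
        ≤ ((G.neighborFinset w ∩ Nf).card : ℝ) * x u + ∑ z ∈ G.neighborFinset w ∩ Wf, x z := by
      intro w hw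
      have hwu : ¬ G.Adj u w := by rw [hWf, Finset.mem_filter] at hw; exact hw.2.2
      have hSw : 0 ≤ ∑ z ∈ G.neighborFinset w ∩ Wf, x z :=
        Finset.sum_nonneg fun z _ => (hx0 z).le
      have hInterU : G.neighborFinset w ∩ {u} = ∅ := by
        ext z
        simp only [Finset.mem_inter, Finset.mem_singleton, SimpleGraph.mem_neighborFinset,
          Finset.notMem_empty, iff_false]
        rintro ⟨hz, rfl⟩
        exact hwu hz.symm
      have hbound : ρ * x w ≤ ((G.neighborFinset w ∩ Nf).card : ℝ) * x u
          + ∑ z ∈ G.neighborFinset w ∩ Wf, x z := by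
        rw [← heig w, sum3 (G.neighborFinset w) x, hInterU, Finset.sum_empty]
        have : ∑ z ∈ G.neighborFinset w ∩ Nf, x z
            ≤ ((G.neighborFinset w ∩ Nf).card : ℝ) * x u := by
          calc ∑ z ∈ G.neighborFinset w ∩ Nf, x z
              ≤ ∑ _z ∈ G.neighborFinset w ∩ Nf, x u := Finset.sum_le_sum fun z _ => hu z
            _ = ((G.neighborFinset w ∩ Nf).card : ℝ) * x u := by
                rw [Finset.sum_const, nsmul_eq_mul]
        linarith
      have h7ρ : 7 * x w ≤ ρ * x w := mul_le_mul_of_nonneg_right hρ (hx0 w).le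
      rcases Nat.le_one_iff_eq_zero_or_eq_one.mp (haC1 w (hWfne w hw)) with h | h
      · rw [h] at hbound ⊢
        push_cast at hbound ⊢
        simp only [zero_mul, mul_zero, zero_add]
        positivity
      · rw [h] at hbound ⊢
        push_cast at hbound ⊢
        linarith
    calc 7 * P3 = ∑ w ∈ Wf, 7 * (((G.neighborFinset w ∩ Nf).card : ℝ) * x w) := by
          rw [hP3, Finset.mul_sum]
      _ ≤ ∑ w ∈ Wf, (((G.neighborFinset w ∩ Nf).card : ℝ) * x u
            + ∑ z ∈ G.neighborFinset w ∩ Wf, x z) := Finset.sum_le_sum key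
      _ = BW * x u + ∑ w ∈ Wf, ∑ z ∈ G.neighborFinset w ∩ Wf, x z := by
          rw [Finset.sum_add_distrib, hBW, Finset.sum_mul]
      _ ≤ BW * x u + 2 * EW * x u := by
          rw [aux_swap G Wf Wf x]
          have : ∑ z ∈ Wf, ((G.neighborFinset z ∩ Wf).card : ℝ) * x z
              ≤ ∑ z ∈ Wf, ((G.neighborFinset z ∩ Wf).card : ℝ) * x u :=
            Finset.sum_le_sum fun z _ =>
              mul_le_mul_of_nonneg_left (hu z) (Nat.cast_nonneg _)
          have h2 : ∑ z ∈ Wf, ((G.neighborFinset z ∩ Wf).card : ℝ) * x u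
              = 2 * EW * x u := by rw [← Finset.sum_mul, heW]
          linarith
  -- nonnegativity of parameters
  have hENpos : 0 ≤ EN := by rw [hEN]; positivity
  have hEWpos : 0 ≤ EW := by rw [hEW]; positivity
  have hBWpos : 0 ≤ BW := by
    rw [hBW]; exact Finset.sum_nonneg fun w _ => Nat.cast_nonneg _
  -- combine
  have h6P2 : 6 * P2 ≤ 2 * EN * x u + P3 := by
    nlinarith [mul_nonneg (by linarith : (0:ℝ) ≤ ρ - 7) hP2pos]
  have hfinal : ρ ^ 2 * x u ≤ ((m : ℝ) - 2 / 3 * (EN + EW)) * x u := by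
    rw [hm]
    nlinarith [mul_nonneg hBWpos hxu.le, mul_nonneg hENpos hxu.le,
      mul_nonneg hEWpos hxu.le]
  exact (mul_le_mul_iff_of_pos_right hxu).mp hfinal
end

section
/- Let G be a connected, non-bipartite, C_4-free graph of size m ≥ 51 with ρ(G) > √(m-2), let X be a Perron vector of G and u* an extremal vertex. Then 1 ≤ e(N_1(u*)) + e(W) ≤ 2, where e(N_1(u*)) is the number of edges of G with both ends in N_1(u*) and e(W) the number of edges with both ends in W = V(G) \ N[u*]. -/
open Matrix SimpleGraph
open scoped Classical

section Aux

open Finset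

variable {V : Type*}

private lemma handshake_in [Fintype V] (G : SimpleGraph V) (S : Finset V) :
    2 * eIn G ↑S = ∑ v ∈ S, (S.filter (G.Adj v)).card := by
  classical
  set H : SimpleGraph V :=
    { Adj := fun a b => G.Adj a b ∧ a ∈ S ∧ b ∈ S
      symm := ⟨by rintro a b ⟨h, ha, hb⟩; exact ⟨h.symm, hb, ha⟩⟩
      loopless := ⟨by rintro a ⟨h, -⟩; exact G.irrefl h⟩ } with hH
  have hadj : ∀ a b, H.Adj a b ↔ G.Adj a b ∧ a ∈ S ∧ b ∈ S := fun a b => Iff.rfl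
  have hes : {e ∈ G.edgeSet | ∀ v ∈ e, v ∈ (↑S : Set V)} = H.edgeSet := by
    ext e
    induction e using Sym2.ind with
    | _ a b =>
      simp only [Set.mem_setOf_eq, mem_edgeSet, Sym2.mem_iff, hadj, Finset.mem_coe]
      constructor
      · rintro ⟨h, hv⟩; exact ⟨h, hv a (Or.inl rfl), hv b (Or.inr rfl)⟩
      · rintro ⟨h, ha, hb⟩
        exact ⟨h, by rintro v (rfl | rfl) <;> assumption⟩
  have h1 : eIn G ↑S = H.edgeFinset.card := by
    rw [eIn, hes, ← Set.ncard_coe_finset, coe_edgeFinset]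
  rw [h1, ← H.sum_degrees_eq_twice_card_edges]
  rw [← Finset.sum_subset (Finset.subset_univ S) (fun v _ hv => ?_)]
  · apply Finset.sum_congr rfl
    intro v hv
    rw [SimpleGraph.degree, neighborFinset_eq_filter]
    congr 1
    ext w
    simp only [Finset.mem_filter, Finset.mem_univ, true_and, hadj]
    tauto
  · rw [SimpleGraph.degree, neighborFinset_eq_filter, Finset.card_eq_zero,
      Finset.filter_eq_empty_iff]
    rintro w - ⟨-, hvS, -⟩
    exact hv hvS

private lemma swap_count [Fintype V] (G : SimpleGraph V) (S T : Finset V) :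
    ∑ v ∈ S, (T.filter (G.Adj v)).card = ∑ w ∈ T, (S.filter (fun v => G.Adj v w)).card := by
  classical
  simp only [Finset.card_filter]
  exact Finset.sum_comm

private lemma c4key (G : SimpleGraph V) (hfree : ¬ ContainsSub (cycG 4) G)
    {u w v₁ v₂ : V} (hw : w ≠ u) (h1 : G.Adj u v₁) (h2 : G.Adj u v₂)
    (h1w : G.Adj v₁ w) (h2w : G.Adj v₂ w) : v₁ = v₂ := by
  by_contra hne
  apply hfree
  have d01 : u ≠ v₁ := h1.ne
  have d03 : u ≠ v₂ := h2.ne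
  have d12 : v₁ ≠ w := h1w.ne
  have d32 : v₂ ≠ w := h2w.ne
  refine ⟨⟨fun i => if i = 0 then u else if i = 1 then v₁ else if i = 2 then w else v₂, ?_⟩, ?_⟩
  · intro a b hab
    fin_cases a <;> fin_cases b <;> simp_all
  · intro a b hab
    have h1' := h1.symm
    have h2' := h2.symm
    have h1w' := h1w.symm
    have h2w' := h2w.symm
    have h0u : G.Adj u u → False := fun h => G.irrefl h
    fin_cases a <;> fin_cases b <;>
      simp only [cycG, SimpleGraph.fromRel_adj] at hab <;>
      first
        | (simp only [ne_eq] at hab ⊢; omega)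
        | (simp only [DFunLike.coe]; simp_all)

private lemma sum_sum_eq_of_unique [Fintype V] (A B : Finset V) (F : V → Finset V) (x : V → ℝ)
    (h : ∀ z, (A.filter (fun v => z ∈ F v)).card = if z ∈ B then 1 else 0) :
    ∑ v ∈ A, ∑ z ∈ F v, x z = ∑ z ∈ B, x z := by
  classical
  have step1 : ∀ v, ∑ z ∈ F v, x z = ∑ z ∈ univ, if z ∈ F v then x z else 0 := by
    intro v; rw [Finset.sum_ite_mem, Finset.univ_inter]
  calc ∑ v ∈ A, ∑ z ∈ F v, x z
      = ∑ v ∈ A, ∑ z ∈ univ, if z ∈ F v then x z else 0 :=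
        Finset.sum_congr rfl fun v _ => step1 v
    _ = ∑ z ∈ univ, ∑ v ∈ A, if z ∈ F v then x z else 0 := Finset.sum_comm
    _ = ∑ z ∈ univ, ((A.filter (fun v => z ∈ F v)).card : ℝ) * x z := by
        apply Finset.sum_congr rfl; intro z _
        rw [← Finset.sum_filter, Finset.sum_const, nsmul_eq_mul]
    _ = ∑ z ∈ univ, (if z ∈ B then x z else 0) := by
        apply Finset.sum_congr rfl; intro z _
        rw [h z]; by_cases hz : z ∈ B <;> simp [hz]
    _ = ∑ z ∈ B, x z := by rw [Finset.sum_ite_mem, Finset.univ_inter]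

end Aux

/-- For a connected non-bipartite `C_4`-free graph of size `m ≥ 51` with
`ρ(G) > √(m-2)`, Perron vector `x` and extremal vertex `u`:
`1 ≤ e(N_1(u)) + e(W) ≤ 2`. -/
theorem stmt9 {V : Type*} [Fintype V] (G : SimpleGraph V) (m : ℕ)
    (hconn : G.Connected) (hnonbip : ¬ G.Colorable 2)
    (hfree : ¬ ContainsSub (cycG 4) G)
    (hm : 51 ≤ m) (hsize : G.edgeSet.ncard = m)
    (hρ : Real.sqrt ((m : ℝ) - 2) < specRad G)
    (x : V → ℝ) (hx : IsPerronVector G x) (u : V) (hu : ∀ v, x v ≤ x u) :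
    1 ≤ eIn G (N1set G u) + eIn G (Wset G u) ∧
    eIn G (N1set G u) + eIn G (Wset G u) ≤ 2 := by
  classical
  obtain ⟨hxpos, hxeig⟩ := hx
  set ρ := specRad G with hρdef
  have heig : ∀ v, ∑ w ∈ G.neighborFinset v, x w = ρ * x v := by
    intro v
    have h := congrFun hxeig v
    rw [SimpleGraph.adjMatrix_mulVec_apply] at h
    simpa [Pi.smul_apply, smul_eq_mul] using h
  set Nu := G.neighborFinset u with hNudef
  set d := G.degree u with hddef
  set Wf : Finset V := Finset.univ.filter (fun v => v ≠ u ∧ ¬ G.Adj u v) with hWfdef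
  have hmemNu : ∀ v, v ∈ Nu ↔ G.Adj u v := fun v => by
    rw [hNudef, SimpleGraph.mem_neighborFinset]
  have hmemWf : ∀ v, v ∈ Wf ↔ v ≠ u ∧ ¬ G.Adj u v := fun v => by
    rw [hWfdef]; simp
  have huNu : u ∉ Nu := fun h => G.irrefl ((hmemNu u).mp h)
  have hNucard : Nu.card = d := rfl
  -- C4-freeness: two distinct neighbors of u cannot have a common neighbor ≠ u
  have key : ∀ w v₁ v₂, w ≠ u → v₁ ∈ Nu → v₂ ∈ Nu → G.Adj v₁ w → G.Adj v₂ w → v₁ = v₂ := by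
    intro w v₁ v₂ hw h1 h2 h1w h2w
    exact c4key G hfree hw ((hmemNu v₁).mp h1) ((hmemNu v₂).mp h2) h1w h2w
  have hle1 : ∀ w, w ≠ u → (Nu.filter (fun v => G.Adj v w)).card ≤ 1 := by
    intro w hw
    apply Finset.card_le_one.mpr
    intro a ha b hb
    simp only [Finset.mem_filter] at ha hb
    exact key w a b hw ha.1 hb.1 ha.2 hb.2
  have hle1' : ∀ v, v ≠ u → (Nu.filter (G.Adj v)).card ≤ 1 := by
    intro v hv
    have : Nu.filter (G.Adj v) = Nu.filter (fun w => G.Adj w v) := by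
      apply Finset.filter_congr; intro w _; simp [G.adj_comm]
    rw [this]; exact hle1 v hv
  -- edges within N1set = edges within Nu
  have hNN : eIn G (N1set G u) = eIn G ↑Nu := by
    have hN1mem : ∀ a b, a ∈ Nu → b ∈ Nu → G.Adj a b → a ∈ N1set G u := by
      intro a b ha hb hab
      have hau : a ≠ u := fun h => huNu (h ▸ ha)
      refine ⟨(hmemNu a).mp ha, ?_⟩
      have hset : G.neighborSet a ∩ G.neighborSet u = ↑(Nu.filter (G.Adj a)) := by
        ext w
        simp only [Set.mem_inter_iff, SimpleGraph.mem_neighborSet, Finset.coe_filter,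
          Set.mem_setOf_eq, hmemNu]
        tauto
      rw [hset, Set.ncard_coe_finset]
      refine le_antisymm (hle1' a hau) ?_
      exact Finset.card_pos.mpr ⟨b, Finset.mem_filter.mpr ⟨hb, hab⟩⟩
    unfold eIn
    congr 1
    ext e
    induction e using Sym2.ind with
    | _ a b =>
      simp only [Set.mem_setOf_eq, SimpleGraph.mem_edgeSet, Sym2.mem_iff]
      constructor
      · rintro ⟨h, hv⟩
        refine ⟨h, ?_⟩
        rintro v (rfl | rfl)
        · exact (hmemNu v).mpr (hv v (Or.inl rfl)).1
        · exact (hmemNu v).mpr (hv v (Or.inr rfl)).1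
      · rintro ⟨h, hv⟩
        refine ⟨h, ?_⟩
        have ha : a ∈ Nu := hv a (Or.inl rfl)
        have hb : b ∈ Nu := hv b (Or.inr rfl)
        rintro v (rfl | rfl)
        · exact hN1mem v b ha hb h
        · exact hN1mem v a hb ha h.symm
  set eN := eIn G (↑Nu : Set V) with heNdef
  set eW := eIn G (Wset G u) with heWdef
  have hHN : 2 * eN = ∑ v ∈ Nu, (Nu.filter (G.Adj v)).card := handshake_in G Nu
  have hWcoe : Wset G u = ↑Wf := by
    ext v; simp only [Wset, Set.mem_setOf_eq, Finset.mem_coe, hmemWf]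
  have hHW : 2 * eW = ∑ w ∈ Wf, (Wf.filter (G.Adj w)).card := by
    rw [heWdef, hWcoe]; exact handshake_in G Wf
  set c := ∑ w ∈ Wf, (Nu.filter (fun v => G.Adj v w)).card with hcdef
  -- partition of the vertex set
  have huniv : {u} ∪ Nu ∪ Wf = Finset.univ := by
    apply Finset.eq_univ_of_forall
    intro v
    simp only [Finset.mem_union, Finset.mem_singleton, hmemNu, hmemWf]
    by_cases h1 : v = u
    · exact Or.inl (Or.inl h1)
    · by_cases h2 : G.Adj u v
      · exact Or.inl (Or.inr h2)
      · exact Or.inr ⟨h1, h2⟩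
  have hdisj1 : Disjoint ({u} : Finset V) Nu := by
    simp only [Finset.disjoint_singleton_left]; exact huNu
  have hdisj2 : Disjoint ({u} ∪ Nu) Wf := by
    rw [Finset.disjoint_union_left]
    constructor
    · simp only [Finset.disjoint_singleton_left, hmemWf]
      rintro ⟨h, -⟩; exact h rfl
    · rw [Finset.disjoint_left]
      intro a ha haW
      exact ((hmemWf a).mp haW).2 ((hmemNu a).mp ha)
  have hmcard : G.edgeFinset.card = m := by
    rw [← hsize, ← SimpleGraph.coe_edgeFinset, Set.ncard_coe_finset]
  have hdegsplit : ∀ v : V, G.degree v =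
      (({u} : Finset V).filter (G.Adj v)).card + (Nu.filter (G.Adj v)).card
        + (Wf.filter (G.Adj v)).card := by
    intro v
    rw [SimpleGraph.degree, SimpleGraph.neighborFinset_eq_filter, ← huniv,
      Finset.filter_union, Finset.filter_union]
    have hd2' : Disjoint
        (Finset.filter (G.Adj v) {u} ∪ Finset.filter (G.Adj v) Nu)
        (Finset.filter (G.Adj v) Wf) := by
      rw [← Finset.filter_union]; exact Finset.disjoint_filter_filter hdisj2
    rw [Finset.card_union_of_disjoint hd2',
      Finset.card_union_of_disjoint (Finset.disjoint_filter_filter hdisj1)]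
  have hsingNu : ∀ v ∈ Nu, (({u} : Finset V).filter (G.Adj v)).card = 1 := by
    intro v hv
    rw [Finset.filter_singleton, if_pos (((hmemNu v).mp hv).symm)]
    rfl
  have hsingWf : ∀ v ∈ Wf, (({u} : Finset V).filter (G.Adj v)).card = 0 := by
    intro v hv
    rw [Finset.filter_singleton, if_neg, Finset.card_empty]
    intro h
    exact ((hmemWf v).mp hv).2 h.symm
  have hA : ∑ v ∈ Nu, G.degree v = d + 2 * eN + c := by
    calc ∑ v ∈ Nu, G.degree v
        = ∑ v ∈ Nu, ((({u} : Finset V).filter (G.Adj v)).card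
            + (Nu.filter (G.Adj v)).card + (Wf.filter (G.Adj v)).card) :=
          Finset.sum_congr rfl fun v _ => hdegsplit v
      _ = ∑ v ∈ Nu, (({u} : Finset V).filter (G.Adj v)).card
            + ∑ v ∈ Nu, (Nu.filter (G.Adj v)).card
            + ∑ v ∈ Nu, (Wf.filter (G.Adj v)).card := by
          rw [Finset.sum_add_distrib, Finset.sum_add_distrib]
      _ = d + 2 * eN + c := by
          rw [Finset.sum_congr rfl hsingNu, Finset.sum_const, smul_eq_mul, mul_one,
            hNucard, ← hHN, swap_count G Nu Wf]
  have hB : ∑ w ∈ Wf, G.degree w = c + 2 * eW := by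
    calc ∑ w ∈ Wf, G.degree w
        = ∑ w ∈ Wf, ((({u} : Finset V).filter (G.Adj w)).card
            + (Nu.filter (G.Adj w)).card + (Wf.filter (G.Adj w)).card) :=
          Finset.sum_congr rfl fun w _ => hdegsplit w
      _ = ∑ w ∈ Wf, (({u} : Finset V).filter (G.Adj w)).card
            + ∑ w ∈ Wf, (Nu.filter (G.Adj w)).card
            + ∑ w ∈ Wf, (Wf.filter (G.Adj w)).card := by
          rw [Finset.sum_add_distrib, Finset.sum_add_distrib]
      _ = c + 2 * eW := by
          rw [Finset.sum_congr rfl hsingWf, Finset.sum_const, smul_eq_mul, mul_zero,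
            ← hHW, hcdef]
          have : ∑ w ∈ Wf, (Nu.filter (G.Adj w)).card
              = ∑ w ∈ Wf, (Nu.filter (fun v => G.Adj v w)).card := by
            apply Finset.sum_congr rfl
            intro w _
            congr 1
            apply Finset.filter_congr
            intro v _
            simp [G.adj_comm]
          omega
  have hmeq : m = d + eN + c + eW := by
    have h2m : 2 * m = d + (d + 2 * eN + c) + (c + 2 * eW) := by
      rw [← hA, ← hB, ← hmcard, ← G.sum_degrees_eq_twice_card_edges, ← huniv,
        Finset.sum_union hdisj2, Finset.sum_union hdisj1, Finset.sum_singleton]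
    omega
  
  -- the set P of vertices ≠ u having a neighbour in N(u), and M ⊆ N(u)
  set P := Finset.univ.filter (fun w => w ≠ u ∧ ∃ v ∈ Nu, G.Adj v w) with hPdef
  set M := Nu.filter (fun v => ∃ z ∈ Nu, G.Adj v z) with hMdef
  have hmemP : ∀ w, w ∈ P ↔ (w ≠ u ∧ ∃ v ∈ Nu, G.Adj v w) := fun w => by
    rw [hPdef]; simp
  have hmemM : ∀ v, v ∈ M ↔ (v ∈ Nu ∧ ∃ z ∈ Nu, G.Adj v z) := fun v => by
    rw [hMdef]; simp
  have hMsub : M ⊆ Nu := Finset.filter_subset _ _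
  have hNune : ∀ v ∈ Nu, v ≠ u := fun v hv h => huNu (h ▸ hv)
  have hPM : ∀ v ∈ Nu, (v ∈ P ↔ v ∈ M) := by
    intro v hv
    rw [hmemP, hmemM]
    constructor
    · rintro ⟨-, z, hz, hadj⟩; exact ⟨hv, z, hz, hadj.symm⟩
    · rintro ⟨-, z, hz, hadj⟩; exact ⟨hNune v hv, z, hz, hadj.symm⟩
  have hcount1 : ∀ z, (Nu.filter (fun v => z ∈ (G.neighborFinset v).erase u)).card
      = if z ∈ P then 1 else 0 := by
    intro z
    have hfe : Nu.filter (fun v => z ∈ (G.neighborFinset v).erase u)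
        = Nu.filter (fun v => z ≠ u ∧ G.Adj v z) := by
      apply Finset.filter_congr; intro v _
      simp [Finset.mem_erase, SimpleGraph.mem_neighborFinset]
    rw [hfe]
    by_cases hz : z ∈ P
    · rw [if_pos hz]
      obtain ⟨hzu, v0, hv0, hadj⟩ := (hmemP z).mp hz
      have heq2 : Nu.filter (fun v => z ≠ u ∧ G.Adj v z) = Nu.filter (fun v => G.Adj v z) := by
        apply Finset.filter_congr; intro v _; simp [hzu]
      rw [heq2]
      exact le_antisymm (hle1 z hzu)
        (Finset.card_pos.mpr ⟨v0, Finset.mem_filter.mpr ⟨hv0, hadj⟩⟩)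
    · rw [if_neg hz, Finset.card_eq_zero, Finset.filter_eq_empty_iff]
      rintro v hv ⟨hzu, hadj⟩
      exact hz ((hmemP z).mpr ⟨hzu, v, hv, hadj⟩)
  have hE1 : ρ ^ 2 * x u = d * x u + ∑ w ∈ P, x w := by
    have hsplit : ∀ v ∈ Nu, ∑ z ∈ G.neighborFinset v, x z
        = x u + ∑ z ∈ (G.neighborFinset v).erase u, x z := by
      intro v hv
      rw [← Finset.add_sum_erase _ x
        (by rw [SimpleGraph.mem_neighborFinset]; exact ((hmemNu v).mp hv).symm)]
    calc ρ ^ 2 * x u = ρ * (ρ * x u) := by ring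
      _ = ρ * ∑ v ∈ Nu, x v := by rw [hNudef, ← heig u]
      _ = ∑ v ∈ Nu, (ρ * x v) := Finset.mul_sum _ _ _
      _ = ∑ v ∈ Nu, ∑ z ∈ G.neighborFinset v, x z :=
          Finset.sum_congr rfl fun v _ => (heig v).symm
      _ = ∑ v ∈ Nu, (x u + ∑ z ∈ (G.neighborFinset v).erase u, x z) :=
          Finset.sum_congr rfl hsplit
      _ = d * x u + ∑ v ∈ Nu, ∑ z ∈ (G.neighborFinset v).erase u, x z := by
          rw [Finset.sum_add_distrib, Finset.sum_const, hNucard, nsmul_eq_mul]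
      _ = d * x u + ∑ w ∈ P, x w := by
          rw [sum_sum_eq_of_unique Nu P _ x hcount1]
  -- |M| = 2 e_N
  have hMcard : M.card = 2 * eN := by
    have h1 : ∑ v ∈ Nu, (Nu.filter (G.Adj v)).card
        = ∑ v ∈ Nu.filter (fun v => (Nu.filter (G.Adj v)).card ≠ 0),
            (Nu.filter (G.Adj v)).card := (Finset.sum_filter_ne_zero _).symm
    have h2 : Nu.filter (fun v => (Nu.filter (G.Adj v)).card ≠ 0) = M := by
      rw [hMdef]
      apply Finset.filter_congr
      intro v _
      rw [ne_eq, Finset.card_eq_zero, ← ne_eq, ← Finset.nonempty_iff_ne_empty,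
        Finset.filter_nonempty_iff]
    have h3 : ∀ v ∈ M, (Nu.filter (G.Adj v)).card = 1 := by
      intro v hv
      obtain ⟨hvNu, z, hz, hadj⟩ := (hmemM v).mp hv
      exact le_antisymm (hle1' v (hNune v hvNu))
        (Finset.card_pos.mpr ⟨z, Finset.mem_filter.mpr ⟨hz, hadj⟩⟩)
    have h4 : 2 * eN = M.card := by
      rw [hHN, h1, h2, Finset.sum_congr rfl h3, Finset.sum_const, smul_eq_mul, mul_one]
    omega
  -- degree-sum bound over P
  have hQdisj : Disjoint P (insert u (Nu \ M)) := by
    rw [Finset.disjoint_left]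
    intro a haP haQ
    rcases Finset.mem_insert.mp haQ with rfl | haNM
    · exact ((hmemP a).mp haP).1 rfl
    · have h' := Finset.mem_sdiff.mp haNM
      exact h'.2 ((hPM a h'.1).mp haP)
  have hsum2m : ∑ w ∈ P, G.degree w + ∑ w ∈ insert u (Nu \ M), G.degree w ≤ 2 * m := by
    rw [← Finset.sum_union hQdisj, ← hmcard, ← G.sum_degrees_eq_twice_card_edges]
    exact Finset.sum_le_sum_of_subset (Finset.subset_univ _)
  have hQge : d + (Nu \ M).card ≤ ∑ w ∈ insert u (Nu \ M), G.degree w := by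
    rw [Finset.sum_insert (fun h => huNu (Finset.mem_sdiff.mp h).1)]
    have hdeg1 : ∀ v ∈ Nu \ M, 1 ≤ G.degree v := by
      intro v hv
      have hvNu := (Finset.mem_sdiff.mp hv).1
      have : 0 < G.degree v :=
        G.degree_pos_iff_exists_adj v |>.mpr ⟨u, ((hmemNu v).mp hvNu).symm⟩
      omega
    have h := Finset.card_nsmul_le_sum (Nu \ M) (fun v => G.degree v) 1 hdeg1
    simp only [smul_eq_mul, mul_one] at h
    omega
  have hcardNM : (Nu \ M).card = d - 2 * eN := by
    rw [Finset.card_sdiff_of_subset hMsub, hNucard, hMcard]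
  have hMled : 2 * eN ≤ d := hMcard ▸ (hNucard ▸ Finset.card_le_card hMsub)
  have hdegPle : ∑ w ∈ P, G.degree w ≤ 4 * eN + 2 * c + 2 * eW := by omega
  -- real-number estimates
  have hxu : 0 < x u := hxpos u
  have hm51 : (51:ℝ) ≤ (m:ℝ) := by exact_mod_cast hm
  have hm2nn : (0:ℝ) ≤ (m:ℝ) - 2 := by linarith
  have hρ7 : (7:ℝ) < ρ := by
    have h49 : Real.sqrt 49 ≤ Real.sqrt ((m:ℝ) - 2) := by
      apply Real.sqrt_le_sqrt; linarith
    have h7 : Real.sqrt 49 = 7 := by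
      rw [show (49:ℝ) = 7 ^ 2 by norm_num, Real.sqrt_sq (by norm_num : (0:ℝ) ≤ 7)]
    linarith
  have hρsq : (m:ℝ) - 2 < ρ ^ 2 := by
    have h1 := Real.sq_sqrt hm2nn
    nlinarith [Real.sqrt_nonneg ((m:ℝ) - 2)]
  have hSP : ∑ w ∈ P, x w = (ρ ^ 2 - d) * x u := by
    rw [sub_mul]; linarith [hE1]
  have hE2 : ρ * ∑ w ∈ P, x w ≤ ((4 * eN + 2 * c + 2 * eW : ℕ) : ℝ) * x u := by
    calc ρ * ∑ w ∈ P, x w = ∑ w ∈ P, (ρ * x w) := Finset.mul_sum _ _ _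
      _ = ∑ w ∈ P, ∑ z ∈ G.neighborFinset w, x z :=
          Finset.sum_congr rfl fun w _ => (heig w).symm
      _ ≤ ∑ w ∈ P, (G.degree w : ℝ) * x u := by
          apply Finset.sum_le_sum
          intro w _
          have h := Finset.sum_le_card_nsmul (G.neighborFinset w) x (x u) (fun z _ => hu z)
          rwa [SimpleGraph.card_neighborFinset_eq_degree, nsmul_eq_mul] at h
      _ = ((∑ w ∈ P, G.degree w : ℕ) : ℝ) * x u := by
          rw [← Finset.sum_mul]; push_cast; ring
      _ ≤ ((4 * eN + 2 * c + 2 * eW : ℕ) : ℝ) * x u := by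
          apply mul_le_mul_of_nonneg_right _ hxu.le
          exact_mod_cast hdegPle
  have hmain : ρ * (ρ ^ 2 - d) ≤ 4 * (eN:ℝ) + 2 * c + 2 * eW := by
    have h2 : (ρ * (ρ ^ 2 - (d:ℝ))) * x u ≤ (4 * (eN:ℝ) + 2 * c + 2 * eW) * x u := by
      have h3 := hE2
      rw [hSP] at h3
      push_cast at h3
      calc (ρ * (ρ ^ 2 - (d:ℝ))) * x u = ρ * ((ρ ^ 2 - (d:ℝ)) * x u) := by ring
        _ ≤ (4 * (eN:ℝ) + 2 * c + 2 * eW) * x u := h3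
    exact le_of_mul_le_mul_right h2 hxu
  have hmcast : (m:ℝ) = (d:ℝ) + eN + c + eW := by exact_mod_cast hmeq
  -- connectivity: if there are no N(u)–W edges then W is empty
  have hWempty_of_c0 : c = 0 → Wf = ∅ := by
    intro hc0
    by_contra hne
    obtain ⟨w0, hw0⟩ := Finset.nonempty_of_ne_empty hne
    have hnoadj : ∀ a ∈ Wf, ∀ b ∈ Nu, ¬ G.Adj b a := by
      intro a ha b hb hadj
      have h1 : 0 < (Nu.filter (fun v => G.Adj v a)).card :=
        Finset.card_pos.mpr ⟨b, Finset.mem_filter.mpr ⟨hb, hadj⟩⟩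
      have h2 : (Nu.filter (fun v => G.Adj v a)).card ≤ c :=
        Finset.single_le_sum (f := fun w => (Nu.filter (fun v => G.Adj v w)).card)
          (fun _ _ => Nat.zero_le _) ha
      omega
    have hclosed : ∀ a b, G.Adj a b → a ∈ Wf → b ∈ Wf := by
      intro a b hab ha
      rw [hmemWf]
      constructor
      · rintro rfl
        exact ((hmemWf a).mp ha).2 hab.symm
      · intro hub
        exact hnoadj a ha b ((hmemNu b).mpr hub) hab.symm
    have hreach : ∀ a b : V, G.Walk a b → a ∈ Wf → b ∈ Wf := by
      intro a b p
      induction p with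
      | nil => exact id
      | cons h q ih => exact fun ha => ih (hclosed _ _ h ha)
    obtain ⟨p⟩ := hconn.preconnected w0 u
    exact ((hmemWf u).mp (hreach w0 u p hw0)).1 rfl
  -- UPPER BOUND
  have hupper : eN + eW ≤ 2 := by
    by_contra hgt
    push_neg at hgt
    have h3 : 3 ≤ eN + eW := hgt
    have h5 : ((eN:ℝ) + c + eW) - 2 < ρ ^ 2 - d := by
      rw [hmcast] at hρsq; linarith
    have hEge : (1:ℝ) ≤ (eN:ℝ) + c + eW - 2 := by
      have h31 : ((3:ℕ):ℝ) ≤ ((eN + c + eW : ℕ):ℝ) := by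
        have h32 : 3 ≤ eN + c + eW := by omega
        exact_mod_cast h32
      push_cast at h31
      linarith
    have h6 : 7 * (((eN:ℝ) + c + eW) - 2) < 4 * eN + 2 * c + 2 * eW := by
      have hg0 : (0:ℝ) < (eN:ℝ) + c + eW - 2 := by linarith
      have hA1 : 7 * (((eN:ℝ) + c + eW) - 2) < ρ * (((eN:ℝ) + c + eW) - 2) :=
        mul_lt_mul_of_pos_right hρ7 hg0
      have hA2 : ρ * (((eN:ℝ) + c + eW) - 2) < ρ * (ρ ^ 2 - d) :=
        mul_lt_mul_of_pos_left h5 (by linarith : (0:ℝ) < ρ)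
      linarith
    have hnat : 3 * eN + 5 * c + 5 * eW < 14 := by
      have h7 : ((3 * eN + 5 * c + 5 * eW : ℕ) : ℝ) < 14 := by push_cast; linarith
      exact_mod_cast h7
    have hc0 : c = 0 := by omega
    have hWe : Wf = ∅ := hWempty_of_c0 hc0
    have heW0 : eW = 0 := by
      have h8 := hHW
      rw [hWe, Finset.sum_empty] at h8
      omega
    have heN3 : 3 ≤ eN := by omega
    have hPMeq : P = M := by
      ext a
      constructor
      · intro ha
        have haP := (hmemP a).mp ha
        have hx2 : a ∈ {u} ∪ Nu ∪ Wf := by rw [huniv]; exact Finset.mem_univ a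
        rw [hWe, Finset.union_empty] at hx2
        rcases Finset.mem_union.mp hx2 with h' | h'
        · exact absurd (Finset.mem_singleton.mp h') haP.1
        · exact (hPM a h').mp ha
      · intro ha; exact (hPM a (hMsub ha)).mpr ha
    have hnbhd : ∀ v ∈ M, G.neighborFinset v = insert u (Nu.filter (G.Adj v)) := by
      intro v hv
      have hvNu := hMsub hv
      ext z
      simp only [SimpleGraph.mem_neighborFinset, Finset.mem_insert, Finset.mem_filter]
      constructor
      · intro hadj
        by_cases hz : z = u
        · exact Or.inl hz
        · refine Or.inr ⟨?_, hadj⟩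
          have hz2 : z ∈ {u} ∪ Nu ∪ Wf := by rw [huniv]; exact Finset.mem_univ z
          rw [hWe, Finset.union_empty] at hz2
          rcases Finset.mem_union.mp hz2 with h' | h'
          · exact absurd (Finset.mem_singleton.mp h') hz
          · exact h'
      · rintro (rfl | ⟨-, hadj⟩)
        · exact ((hmemNu v).mp hvNu).symm
        · exact hadj
    have hcount2 : ∀ z, (M.filter (fun v => z ∈ Nu.filter (G.Adj v))).card
        = if z ∈ M then 1 else 0 := by
      intro z
      by_cases hz : z ∈ M
      · rw [if_pos hz]
        apply le_antisymm
        · refine le_trans (Finset.card_le_card ?_) (hle1 z (hNune z (hMsub hz)))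
          intro v hvf
          rw [Finset.mem_filter] at hvf
          have h9 := Finset.mem_filter.mp hvf.2
          exact Finset.mem_filter.mpr ⟨hMsub hvf.1, h9.2⟩
        · obtain ⟨hzNu, v0, hv0, hadj⟩ := (hmemM z).mp hz
          have hv0M : v0 ∈ M := (hmemM v0).mpr ⟨hv0, z, hzNu, hadj.symm⟩
          exact Finset.card_pos.mpr ⟨v0, Finset.mem_filter.mpr
            ⟨hv0M, Finset.mem_filter.mpr ⟨hzNu, hadj.symm⟩⟩⟩
      · rw [if_neg hz, Finset.card_eq_zero, Finset.filter_eq_empty_iff]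
        intro v hvM hzmem
        rw [Finset.mem_filter] at hzmem
        exact hz ((hmemM z).mpr ⟨hzmem.1, v, hMsub hvM, hzmem.2.symm⟩)
    have hsumM : ∑ v ∈ M, ∑ z ∈ Nu.filter (G.Adj v), x z = ∑ z ∈ M, x z :=
      sum_sum_eq_of_unique M M _ x hcount2
    have hMx : ρ * ∑ v ∈ M, x v = ((2 * eN : ℕ) : ℝ) * x u + ∑ v ∈ M, x v := by
      calc ρ * ∑ v ∈ M, x v = ∑ v ∈ M, (ρ * x v) := Finset.mul_sum _ _ _
        _ = ∑ v ∈ M, ∑ z ∈ G.neighborFinset v, x z :=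
            Finset.sum_congr rfl fun v _ => (heig v).symm
        _ = ∑ v ∈ M, (x u + ∑ z ∈ Nu.filter (G.Adj v), x z) := by
            apply Finset.sum_congr rfl
            intro v hv
            rw [hnbhd v hv, Finset.sum_insert
              (fun hmem => huNu (Finset.mem_filter.mp hmem).1)]
        _ = (M.card : ℝ) * x u + ∑ v ∈ M, ∑ z ∈ Nu.filter (G.Adj v), x z := by
            rw [Finset.sum_add_distrib, Finset.sum_const, nsmul_eq_mul]
        _ = ((2 * eN : ℕ) : ℝ) * x u + ∑ z ∈ M, x z := by rw [hMcard, hsumM]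
    have hSM : ∑ v ∈ M, x v = (ρ ^ 2 - d) * x u := by rw [← hPMeq]; exact hSP
    have hfin : (ρ - 1) * (ρ ^ 2 - (d:ℝ)) = 2 * (eN:ℝ) := by
      have h1 : ((ρ - 1) * (ρ ^ 2 - (d:ℝ))) * x u = (2 * (eN:ℝ)) * x u := by
        rw [hSM] at hMx
        push_cast at hMx
        ring_nf
        ring_nf at hMx
        linarith
      exact mul_right_cancel₀ (ne_of_gt hxu) h1
    have hd2 : (eN:ℝ) - 2 < ρ ^ 2 - d := by
      have hc0' : (c:ℝ) = 0 := by exact_mod_cast hc0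
      have heW0' : (eW:ℝ) = 0 := by exact_mod_cast heW0
      rw [hmcast] at hρsq
      linarith
    have heN3' : (3:ℝ) ≤ (eN:ℝ) := by exact_mod_cast heN3
    have hstep1 : (6:ℝ) * (ρ ^ 2 - d) < (ρ - 1) * (ρ ^ 2 - d) :=
      mul_lt_mul_of_pos_right (by linarith) (by linarith)
    have hstep2 : (6:ℝ) * ((eN:ℝ) - 2) < 6 * (ρ ^ 2 - d) :=
      mul_lt_mul_of_pos_left hd2 (by norm_num)
    linarith
  -- LOWER BOUND
  have hlower : 1 ≤ eN + eW := by
    by_contra hlt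
    push_neg at hlt
    have heN0 : eN = 0 := by omega
    have heW00 : eW = 0 := by omega
    have hcol : G.Colorable 2 := by
      refine ⟨SimpleGraph.Coloring.mk (fun v => if G.Adj u v then 1 else 0) ?_⟩
      intro a b hab
      by_cases ha : G.Adj u a <;> by_cases hb : G.Adj u b
      · exfalso
        have haNu : a ∈ Nu := (hmemNu a).mpr ha
        have hbNu : b ∈ Nu := (hmemNu b).mpr hb
        have h1 : 0 < (Nu.filter (G.Adj a)).card :=
          Finset.card_pos.mpr ⟨b, Finset.mem_filter.mpr ⟨hbNu, hab⟩⟩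
        have h2 : (Nu.filter (G.Adj a)).card ≤ 2 * eN :=
          hHN ▸ Finset.single_le_sum
            (f := fun v => (Nu.filter (G.Adj v)).card) (fun _ _ => Nat.zero_le _) haNu
        omega
      · simp [ha, hb]
      · simp [ha, hb]
      · exfalso
        have hane : a ≠ u := by rintro rfl; exact hb hab
        have hbne : b ≠ u := by rintro rfl; exact ha hab.symm
        have haW : a ∈ Wf := (hmemWf a).mpr ⟨hane, ha⟩
        have hbW : b ∈ Wf := (hmemWf b).mpr ⟨hbne, hb⟩
        have h1 : 0 < (Wf.filter (G.Adj a)).card :=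
          Finset.card_pos.mpr ⟨b, Finset.mem_filter.mpr ⟨hbW, hab⟩⟩
        have h2 : (Wf.filter (G.Adj a)).card ≤ 2 * eW :=
          hHW ▸ Finset.single_le_sum
            (f := fun w => (Wf.filter (G.Adj w)).card) (fun _ _ => Nat.zero_le _) haW
        omega
    exact hnonbip hcol
  rw [hNN]
  exact ⟨hlower, hupper⟩
end

section
/- For m ≥ 51, let G_{10} be the graph of size m obtained from the star K_{1,m-2} with center u by adding an edge u_1u_2 between two leaves u_1, u_2 and attaching a pendant vertex w to u_1. Then √(m-2) < ρ(G_{10}) < ρ(S_{m-1}^2), and ρ(G_{10}) is the largest real root of the polynomial x⁴ - m x² - 2x + 2m - 7. -/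
open Matrix SimpleGraph
open scoped Classical

/-- `G₁₀(m)`: the star `K_{1,m-2}` with center `0` and leaves `1,…,m-2`, together with
the edge `1-2` between two leaves and a pendant vertex `m-1` attached to `1`;
it has `m` vertices and `m` edges. -/
def G10 (m : ℕ) : SimpleGraph (Fin m) :=
  SimpleGraph.fromRel (fun a b =>
    (a.val = 0 ∧ 1 ≤ b.val ∧ b.val ≤ m - 2) ∨ (a.val = 1 ∧ (b.val = 2 ∨ b.val = m - 1)))


section Aux

lemma RS.mulVec_eq_sum_ite {V : Type*} [Fintype V] (G : SimpleGraph V) (x : V → ℝ) (v : V) :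
    (G.adjMatrix ℝ *ᵥ x) v = ∑ u : V, if G.Adj v u then x u else 0 := by
  rw [SimpleGraph.adjMatrix_mulVec_apply, SimpleGraph.neighborFinset_eq_filter, Finset.sum_filter]

lemma RS.sum_single (m j : ℕ) (hj : j < m) (b : ℝ) :
    ∑ i ∈ Finset.range m, (if i = j then b else 0) = b := by
  rw [Finset.sum_ite_eq' (Finset.range m) j (fun _ => b)]
  simp [hj]

lemma RS.sum_interval (m lo hi : ℕ) (hhi : hi < m) (d : ℝ) :
    ∑ i ∈ Finset.range m, (if lo ≤ i ∧ i ≤ hi then d else 0)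
      = ((hi + 1 - lo : ℕ) : ℝ) * d := by
  rw [← Finset.sum_filter]
  have h : (Finset.range m).filter (fun i => lo ≤ i ∧ i ≤ hi) = Finset.Icc lo hi := by
    ext i
    simp only [Finset.mem_filter, Finset.mem_range, Finset.mem_Icc]
    omega
  rw [h, Finset.sum_const, nsmul_eq_mul, Nat.card_Icc]

lemma RS.eig_bddAbove {V : Type*} [Fintype V] (G : SimpleGraph V) :
    BddAbove {t : ℝ | ∃ x : V → ℝ, x ≠ 0 ∧ G.adjMatrix ℝ *ᵥ x = t • x} := by
  refine ⟨(Fintype.card V : ℝ), ?_⟩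
  rintro t ⟨x, hx0, hx⟩
  obtain ⟨w, hw⟩ := Function.ne_iff.mp hx0
  obtain ⟨v, -, hv⟩ := Finset.exists_max_image (Finset.univ : Finset V)
    (fun v => |x v|) ⟨w, Finset.mem_univ w⟩
  have hxv : 0 < |x v| := lt_of_lt_of_le (abs_pos.mpr hw) (hv w (Finset.mem_univ w))
  have h1 : t * x v = ∑ u ∈ G.neighborFinset v, x u := by
    rw [← SimpleGraph.adjMatrix_mulVec_apply, hx]
    simp
  have h2 : |t| * |x v| ≤ (Fintype.card V : ℝ) * |x v| := by
    rw [← abs_mul, h1]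
    calc |∑ u ∈ G.neighborFinset v, x u| ≤ ∑ u ∈ G.neighborFinset v, |x u| :=
          Finset.abs_sum_le_sum_abs _ _
      _ ≤ ∑ _u ∈ G.neighborFinset v, |x v| :=
          Finset.sum_le_sum (fun u _ => hv u (Finset.mem_univ u))
      _ = ((G.neighborFinset v).card : ℝ) * |x v| := by rw [Finset.sum_const, nsmul_eq_mul]
      _ ≤ (Fintype.card V : ℝ) * |x v| := by
          apply mul_le_mul_of_nonneg_right _ (abs_nonneg _)
          exact_mod_cast Finset.card_le_univ _
  calc t ≤ |t| := le_abs_self t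
    _ ≤ (Fintype.card V : ℝ) := le_of_mul_le_mul_right h2 hxv

lemma RS.specRad_eq_of_perron {V : Type*} [Fintype V] [Nonempty V] (G : SimpleGraph V)
    (x : V → ℝ) (hx : ∀ v, 0 < x v) (r : ℝ) (hr : G.adjMatrix ℝ *ᵥ x = r • x) :
    specRad G = r := by
  have hxne : x ≠ 0 := by
    intro h
    exact (hx (Classical.arbitrary V)).ne' (congrFun h (Classical.arbitrary V))
  have hmem : r ∈ {t : ℝ | ∃ x : V → ℝ, x ≠ 0 ∧ G.adjMatrix ℝ *ᵥ x = t • x} := ⟨x, hxne, hr⟩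
  have hr0 : 0 ≤ r := by
    set v := Classical.arbitrary V
    have h1 : r * x v = ∑ u ∈ G.neighborFinset v, x u := by
      rw [← SimpleGraph.adjMatrix_mulVec_apply, hr]
      simp
    have h2 : 0 ≤ r * x v := by
      rw [h1]
      exact Finset.sum_nonneg (fun u _ => (hx u).le)
    nlinarith [hx v]
  apply IsGreatest.csSup_eq
  refine ⟨hmem, ?_⟩
  rintro t ⟨y, hy0, hy⟩
  obtain ⟨w, hw⟩ := Function.ne_iff.mp hy0
  obtain ⟨v0, -, hv0⟩ := Finset.exists_max_image (Finset.univ : Finset V)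
    (fun v => |y v| / x v) ⟨w, Finset.mem_univ w⟩
  set c := |y v0| / x v0 with hc
  have hcpos : 0 < c := by
    have h1 : 0 < |y w| / x w := div_pos (abs_pos.mpr hw) (hx w)
    exact lt_of_lt_of_le h1 (hv0 w (Finset.mem_univ w))
  have hcw : ∀ u, |y u| ≤ c * x u := by
    intro u
    have := hv0 u (Finset.mem_univ u)
    rw [div_le_iff₀ (hx u)] at this
    linarith [this]
  have hyv0 : |y v0| = c * x v0 := by
    rw [hc, div_mul_cancel₀ _ (hx v0).ne']
  have hyv0pos : 0 < |y v0| := by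
    rw [hyv0]
    exact mul_pos hcpos (hx v0)
  have h1 : t * y v0 = ∑ u ∈ G.neighborFinset v0, y u := by
    rw [← SimpleGraph.adjMatrix_mulVec_apply, hy]
    simp
  have h2 : |t| * |y v0| ≤ r * |y v0| := by
    rw [← abs_mul, h1]
    calc |∑ u ∈ G.neighborFinset v0, y u| ≤ ∑ u ∈ G.neighborFinset v0, |y u| :=
          Finset.abs_sum_le_sum_abs _ _
      _ ≤ ∑ u ∈ G.neighborFinset v0, c * x u := Finset.sum_le_sum (fun u _ => hcw u)
      _ = c * ∑ u ∈ G.neighborFinset v0, x u := by rw [Finset.mul_sum]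
      _ = c * (r * x v0) := by rw [← SimpleGraph.adjMatrix_mulVec_apply, hr]; simp
      _ = r * |y v0| := by rw [hyv0]; ring
  calc t ≤ |t| := le_abs_self t
    _ ≤ r := le_of_mul_le_mul_right h2 hyv0pos

noncomputable def RS.xG10 (m : ℕ) (a b c d e : ℝ) : Fin m → ℝ :=
  fun v => if v.val = 0 then a else if v.val = 1 then b else if v.val = 2 then c
    else if v.val = m - 1 then e else d

lemma RS.G10_mulVec (m : ℕ) (hm : 51 ≤ m) (a b c d e : ℝ) (v : Fin m) :
    ((G10 m).adjMatrix ℝ *ᵥ RS.xG10 m a b c d e) v =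
      if v.val = 0 then b + c + ((m : ℝ) - 4) * d
      else if v.val = 1 then a + c + e
      else if v.val = 2 then a + b
      else if v.val = m - 1 then b
      else a := by
  rw [RS.mulVec_eq_sum_ite]
  by_cases h0 : v.val = 0
  · rw [if_pos h0]
    have step : ∀ w : Fin m, (if (G10 m).Adj v w then RS.xG10 m a b c d e w else 0)
        = (fun i => (if i = 1 then b else 0) + (if i = 2 then c else 0)
            + (if 3 ≤ i ∧ i ≤ m - 2 then d else 0)) w.val := by
      intro w
      have hw := w.isLt
      simp only [G10, SimpleGraph.fromRel_adj, RS.xG10, ne_eq, Fin.ext_iff]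
      split_ifs <;> first | (exfalso; omega) | ring1
    rw [Finset.sum_congr rfl (fun w _ => step w),
      Fin.sum_univ_eq_sum_range (fun i => (if i = 1 then b else 0) + (if i = 2 then c else 0)
            + (if 3 ≤ i ∧ i ≤ m - 2 then d else 0)) m]
    rw [Finset.sum_add_distrib, Finset.sum_add_distrib,
      RS.sum_single m 1 (by omega) b, RS.sum_single m 2 (by omega) c,
      RS.sum_interval m 3 (m - 2) (by omega) d]
    have hc : ((m - 2 + 1 - 3 : ℕ) : ℝ) = (m : ℝ) - 4 := by
      have h4 : m - 2 + 1 - 3 = m - 4 := by omega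
      rw [h4, Nat.cast_sub (by omega)]
      norm_num
    rw [hc]
  · rw [if_neg h0]
    by_cases h1 : v.val = 1
    · rw [if_pos h1]
      have step : ∀ w : Fin m, (if (G10 m).Adj v w then RS.xG10 m a b c d e w else 0)
          = (fun i => (if i = 0 then a else 0) + (if i = 2 then c else 0)
              + (if i = m - 1 then e else 0)) w.val := by
        intro w
        have hw := w.isLt
        simp only [G10, SimpleGraph.fromRel_adj, RS.xG10, ne_eq, Fin.ext_iff]
        split_ifs <;> first | (exfalso; omega) | ring1
      rw [Finset.sum_congr rfl (fun w _ => step w),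
        Fin.sum_univ_eq_sum_range (fun i => (if i = 0 then a else 0) + (if i = 2 then c else 0)
              + (if i = m - 1 then e else 0)) m]
      rw [Finset.sum_add_distrib, Finset.sum_add_distrib,
        RS.sum_single m 0 (by omega) a, RS.sum_single m 2 (by omega) c,
        RS.sum_single m (m - 1) (by omega) e]
    · rw [if_neg h1]
      by_cases h2 : v.val = 2
      · rw [if_pos h2]
        have step : ∀ w : Fin m, (if (G10 m).Adj v w then RS.xG10 m a b c d e w else 0)
            = (fun i => (if i = 0 then a else 0) + (if i = 1 then b else 0)) w.val := by
          intro w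
          have hw := w.isLt
          simp only [G10, SimpleGraph.fromRel_adj, RS.xG10, ne_eq, Fin.ext_iff]
          split_ifs <;> first | (exfalso; omega) | ring1
        rw [Finset.sum_congr rfl (fun w _ => step w),
          Fin.sum_univ_eq_sum_range (fun i => (if i = 0 then a else 0)
            + (if i = 1 then b else 0)) m]
        rw [Finset.sum_add_distrib, RS.sum_single m 0 (by omega) a,
          RS.sum_single m 1 (by omega) b]
      · rw [if_neg h2]
        by_cases hl : v.val = m - 1
        · rw [if_pos hl]
          have step : ∀ w : Fin m, (if (G10 m).Adj v w then RS.xG10 m a b c d e w else 0)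
              = (fun i => if i = 1 then b else 0) w.val := by
            intro w
            have hw := w.isLt
            simp only [G10, SimpleGraph.fromRel_adj, RS.xG10, ne_eq, Fin.ext_iff]
            split_ifs <;> first | (exfalso; omega) | ring1
          rw [Finset.sum_congr rfl (fun w _ => step w),
            Fin.sum_univ_eq_sum_range (fun i => if i = 1 then b else 0) m]
          rw [RS.sum_single m 1 (by omega) b]
        · rw [if_neg hl]
          have hv := v.isLt
          have step : ∀ w : Fin m, (if (G10 m).Adj v w then RS.xG10 m a b c d e w else 0)
              = (fun i => if i = 0 then a else 0) w.val := by
            intro w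
            have hw := w.isLt
            simp only [G10, SimpleGraph.fromRel_adj, RS.xG10, ne_eq, Fin.ext_iff]
            split_ifs <;> first | (exfalso; omega) | ring1
          rw [Finset.sum_congr rfl (fun w _ => step w),
            Fin.sum_univ_eq_sum_range (fun i => if i = 0 then a else 0) m]
          rw [RS.sum_single m 0 (by omega) a]

lemma RS.G10_eigenvec (m : ℕ) (hm : 51 ≤ m) (y : ℝ) (hy0 : y ≠ 0)
    (hy : y ^ 4 - (m : ℝ) * y ^ 2 - 2 * y + 2 * (m : ℝ) - 7 = 0) :
    (G10 m).adjMatrix ℝ *ᵥ RS.xG10 m (y + 1) (y ^ 2 - (m : ℝ) + 3)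
        ((y + 1 + (y ^ 2 - (m : ℝ) + 3)) / y) ((y + 1) / y) ((y ^ 2 - (m : ℝ) + 3) / y)
      = y • RS.xG10 m (y + 1) (y ^ 2 - (m : ℝ) + 3)
        ((y + 1 + (y ^ 2 - (m : ℝ) + 3)) / y) ((y + 1) / y) ((y ^ 2 - (m : ℝ) + 3) / y) := by
  funext v
  rw [Pi.smul_apply, smul_eq_mul, RS.G10_mulVec m hm _ _ _ _ _ v]
  simp only [RS.xG10]
  split_ifs
  · field_simp <;>
      first
      | ring1
      | linear_combination hy
      | linear_combination -hy
      | linear_combination y * hy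
      | linear_combination -y * hy
      | linear_combination y ^ 2 * hy
      | linear_combination -(y ^ 2) * hy
  · field_simp <;>
      first
      | ring1
      | linear_combination hy
      | linear_combination -hy
      | linear_combination y * hy
      | linear_combination -y * hy
      | linear_combination y ^ 2 * hy
      | linear_combination -(y ^ 2) * hy
  · field_simp <;>
      first
      | ring1
      | linear_combination hy
      | linear_combination -hy
  · field_simp
  · field_simp

noncomputable def RS.ySg (n : ℕ) (A B C : ℝ) : Fin n → ℝ :=
  fun v => if v.val = 0 then A else if v.val ≤ 4 then B else C

lemma RS.Sg_mulVec (n : ℕ) (hn : 50 ≤ n) (A B C : ℝ) (v : Fin n) :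
    ((Sgraph n 2).adjMatrix ℝ *ᵥ RS.ySg n A B C) v =
      if v.val = 0 then 4 * B + ((n : ℝ) - 5) * C
      else if v.val ≤ 4 then A + B
      else A := by
  rw [RS.mulVec_eq_sum_ite]
  by_cases h0 : v.val = 0
  · rw [if_pos h0]
    have step : ∀ w : Fin n, (if (Sgraph n 2).Adj v w then RS.ySg n A B C w else 0)
        = (fun i => (if 1 ≤ i ∧ i ≤ 4 then B else 0) + (if 5 ≤ i ∧ i ≤ n - 1 then C else 0))
            w.val := by
      intro w
      have hw := w.isLt
      simp only [Sgraph, SimpleGraph.fromRel_adj, RS.ySg, ne_eq, Fin.ext_iff]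
      split_ifs <;> first | (exfalso; omega) | ring1
    rw [Finset.sum_congr rfl (fun w _ => step w),
      Fin.sum_univ_eq_sum_range (fun i => (if 1 ≤ i ∧ i ≤ 4 then B else 0)
        + (if 5 ≤ i ∧ i ≤ n - 1 then C else 0)) n]
    rw [Finset.sum_add_distrib, RS.sum_interval n 1 4 (by omega) B,
      RS.sum_interval n 5 (n - 1) (by omega) C]
    have hc1 : ((4 + 1 - 1 : ℕ) : ℝ) = 4 := by norm_num
    have hc2 : ((n - 1 + 1 - 5 : ℕ) : ℝ) = (n : ℝ) - 5 := by
      have h4 : n - 1 + 1 - 5 = n - 5 := by omega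
      rw [h4, Nat.cast_sub (by omega)]
      norm_num
    rw [hc1, hc2]
  · rw [if_neg h0]
    by_cases h4 : v.val ≤ 4
    · rw [if_pos h4]
      have hp : ∃ p : ℕ, p < n ∧ p ≠ 0 ∧ p ≤ 4 ∧
          ((v.val % 2 = 1 ∧ p = v.val + 1) ∨ (p % 2 = 1 ∧ v.val = p + 1)) := by
        refine ⟨if v.val % 2 = 1 then v.val + 1 else v.val - 1, ?_, ?_, ?_, ?_⟩ <;>
          split_ifs <;> omega
      obtain ⟨p, hpn, hp0, hp4, hpv⟩ := hp
      have step : ∀ w : Fin n, (if (Sgraph n 2).Adj v w then RS.ySg n A B C w else 0)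
          = (fun i => (if i = 0 then A else 0) + (if i = p then B else 0)) w.val := by
        intro w
        have hw := w.isLt
        simp only [Sgraph, SimpleGraph.fromRel_adj, RS.ySg, ne_eq, Fin.ext_iff]
        split_ifs <;> first | (exfalso; omega) | ring1
      rw [Finset.sum_congr rfl (fun w _ => step w),
        Fin.sum_univ_eq_sum_range (fun i => (if i = 0 then A else 0)
          + (if i = p then B else 0)) n]
      rw [Finset.sum_add_distrib, RS.sum_single n 0 (by omega) A, RS.sum_single n p hpn B]
    · rw [if_neg h4]
      have step : ∀ w : Fin n, (if (Sgraph n 2).Adj v w then RS.ySg n A B C w else 0)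
          = (fun i => if i = 0 then A else 0) w.val := by
        intro w
        have hw := w.isLt
        simp only [Sgraph, SimpleGraph.fromRel_adj, RS.ySg, ne_eq, Fin.ext_iff]
        split_ifs <;> first | (exfalso; omega) | ring1
      rw [Finset.sum_congr rfl (fun w _ => step w),
        Fin.sum_univ_eq_sum_range (fun i => if i = 0 then A else 0) n]
      rw [RS.sum_single n 0 (by omega) A]

lemma RS.Sg_eigenvec (n : ℕ) (hn : 50 ≤ n) (s : ℝ)
    (hq : s ^ 3 - s ^ 2 - ((n : ℝ) - 1) * s + (n : ℝ) - 5 = 0) :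
    (Sgraph n 2).adjMatrix ℝ *ᵥ RS.ySg n (s * (s - 1)) s (s - 1)
      = s • RS.ySg n (s * (s - 1)) s (s - 1) := by
  funext v
  rw [Pi.smul_apply, smul_eq_mul, RS.Sg_mulVec n hn _ _ _ v]
  simp only [RS.ySg]
  split_ifs
  · first
      | ring1
      | linear_combination hq
      | linear_combination -hq
  · ring1
  · ring1

end Aux

/-- For `m ≥ 51`: `√(m-2) < ρ(G₁₀) < ρ(S_{m-1}^2)`, and `ρ(G₁₀)` is the largest real
root of `x⁴ - m x² - 2x + 2m - 7`. -/
theorem stmt11 (m : ℕ) (hm : 51 ≤ m) :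
    Real.sqrt ((m : ℝ) - 2) < specRad (G10 m) ∧
    specRad (G10 m) < specRad (Sgraph (m - 1) 2) ∧
    (specRad (G10 m) ^ 4 - (m : ℝ) * specRad (G10 m) ^ 2 - 2 * specRad (G10 m)
        + 2 * (m : ℝ) - 7 = 0) ∧
    (∀ y : ℝ, y ^ 4 - (m : ℝ) * y ^ 2 - 2 * y + 2 * (m : ℝ) - 7 = 0 →
        y ≤ specRad (G10 m)) := by
  classical
  have hm' : (51 : ℝ) ≤ (m : ℝ) := by exact_mod_cast hm
  have hsq2 : Real.sqrt ((m : ℝ) - 2) ^ 2 = (m : ℝ) - 2 := Real.sq_sqrt (by linarith)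
  have hsqm : Real.sqrt (m : ℝ) ^ 2 = (m : ℝ) := Real.sq_sqrt (by linarith)
  have hs2nn : 0 ≤ Real.sqrt ((m : ℝ) - 2) := Real.sqrt_nonneg _
  have hs7 : (7 : ℝ) ≤ Real.sqrt ((m : ℝ) - 2) := by
    have h49 : Real.sqrt 49 ≤ Real.sqrt ((m : ℝ) - 2) := Real.sqrt_le_sqrt (by linarith)
    rwa [show (49 : ℝ) = 7 ^ 2 by norm_num, Real.sqrt_sq (by norm_num : (0:ℝ) ≤ 7)] at h49
  have hsqm_le : Real.sqrt (m : ℝ) ≤ (m : ℝ) / 2 := by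
    rw [show (m : ℝ) / 2 = Real.sqrt (((m : ℝ) / 2) ^ 2) from (Real.sqrt_sq (by linarith)).symm]
    exact Real.sqrt_le_sqrt (by nlinarith)
  have hle : Real.sqrt ((m : ℝ) - 2) ≤ Real.sqrt (m : ℝ) := Real.sqrt_le_sqrt (by linarith)
  have hPa0 : (fun x : ℝ => x ^ 4 - (m : ℝ) * x ^ 2 - 2 * x + 2 * (m : ℝ) - 7)
      (Real.sqrt ((m : ℝ) - 2)) < 0 := by
    have hPa : (fun x : ℝ => x ^ 4 - (m : ℝ) * x ^ 2 - 2 * x + 2 * (m : ℝ) - 7)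
        (Real.sqrt ((m : ℝ) - 2)) = -3 - 2 * Real.sqrt ((m : ℝ) - 2) := by
      show Real.sqrt ((m : ℝ) - 2) ^ 4 - (m : ℝ) * Real.sqrt ((m : ℝ) - 2) ^ 2
          - 2 * Real.sqrt ((m : ℝ) - 2) + 2 * (m : ℝ) - 7 = -3 - 2 * Real.sqrt ((m : ℝ) - 2)
      linear_combination (Real.sqrt ((m : ℝ) - 2) ^ 2 - 2) * hsq2
    rw [hPa]
    linarith
  have hPb0 : 0 < (fun x : ℝ => x ^ 4 - (m : ℝ) * x ^ 2 - 2 * x + 2 * (m : ℝ) - 7)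
      (Real.sqrt (m : ℝ)) := by
    have hPb : (fun x : ℝ => x ^ 4 - (m : ℝ) * x ^ 2 - 2 * x + 2 * (m : ℝ) - 7)
        (Real.sqrt (m : ℝ)) = 2 * (m : ℝ) - 7 - 2 * Real.sqrt (m : ℝ) := by
      show Real.sqrt (m : ℝ) ^ 4 - (m : ℝ) * Real.sqrt (m : ℝ) ^ 2
          - 2 * Real.sqrt (m : ℝ) + 2 * (m : ℝ) - 7 = 2 * (m : ℝ) - 7 - 2 * Real.sqrt (m : ℝ)
      linear_combination (Real.sqrt (m : ℝ) ^ 2) * hsqm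
    rw [hPb]
    linarith
  have hPcont : ContinuousOn (fun x : ℝ => x ^ 4 - (m : ℝ) * x ^ 2 - 2 * x + 2 * (m : ℝ) - 7)
      (Set.Icc (Real.sqrt ((m : ℝ) - 2)) (Real.sqrt (m : ℝ))) := by
    apply Continuous.continuousOn
    fun_prop
  obtain ⟨r, hrmem, hr⟩ := intermediate_value_Icc hle hPcont
    (Set.mem_Icc.mpr ⟨hPa0.le, hPb0.le⟩)
  have hrP : r ^ 4 - (m : ℝ) * r ^ 2 - 2 * r + 2 * (m : ℝ) - 7 = 0 := hr
  have hr1 : Real.sqrt ((m : ℝ) - 2) < r := by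
    rcases lt_or_eq_of_le hrmem.1 with h | h
    · exact h
    · exfalso
      rw [← h] at hrP
      simp only at hPa0
      linarith
  have hr2 : r < Real.sqrt (m : ℝ) := by
    rcases lt_or_eq_of_le hrmem.2 with h | h
    · exact h
    · exfalso
      rw [h] at hrP
      simp only at hPb0
      linarith
  have hr7 : 7 < r := lt_of_le_of_lt hs7 hr1
  have hr0 : 0 < r := by linarith
  have hrsq1 : (m : ℝ) - 2 < r ^ 2 := by nlinarith [hr1, hs2nn, hsq2]
  have hrsq2 : r ^ 2 < (m : ℝ) := by nlinarith [hr2, hr0, hsqm, Real.sqrt_nonneg (m : ℝ)]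
  haveI : Nonempty (Fin m) := ⟨⟨0, by omega⟩⟩
  -- the Perron vector for G10
  have hx_pos : ∀ v, 0 < RS.xG10 m (r + 1) (r ^ 2 - (m : ℝ) + 3)
      ((r + 1 + (r ^ 2 - (m : ℝ) + 3)) / r) ((r + 1) / r) ((r ^ 2 - (m : ℝ) + 3) / r) v := by
    intro v
    simp only [RS.xG10]
    split_ifs
    · linarith
    · linarith
    · exact div_pos (by linarith) hr0
    · exact div_pos (by linarith) hr0
    · exact div_pos (by linarith) hr0
  have hspec : specRad (G10 m) = r :=
    RS.specRad_eq_of_perron (G10 m) _ hx_pos r (RS.G10_eigenvec m hm r hr0.ne' hrP)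
  -- the second root s for Sgraph
  have hQr : r ^ 3 - r ^ 2 - ((m : ℝ) - 2) * r + (m : ℝ) - 6 < 0 := by
    have key : r * (r ^ 3 - r ^ 2 - ((m : ℝ) - 2) * r + (m : ℝ) - 6)
        = -r ^ 3 + 2 * r ^ 2 + ((m : ℝ) - 4) * r - 2 * (m : ℝ) + 7 := by
      linear_combination hrP
    have hneg : -r ^ 3 + 2 * r ^ 2 + ((m : ℝ) - 4) * r - 2 * (m : ℝ) + 7 < 0 := by
      nlinarith [mul_pos hr0 (sub_pos.mpr hrsq1), hrsq2, hr7]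
    by_contra hcon
    push_neg at hcon
    nlinarith [mul_nonneg hr0.le hcon]
  have hQm : 0 < (m : ℝ) ^ 3 - (m : ℝ) ^ 2 - ((m : ℝ) - 2) * (m : ℝ) + (m : ℝ) - 6 := by
    have hfac : (m : ℝ) ^ 3 - (m : ℝ) ^ 2 - ((m : ℝ) - 2) * (m : ℝ) + (m : ℝ) - 6
        = ((m : ℝ) - 2) * ((m : ℝ) ^ 2 + 3) := by ring
    rw [hfac]
    apply mul_pos (by linarith)
    positivity
  have hrm : r ≤ (m : ℝ) := by linarith
  have hQcont : ContinuousOn (fun x : ℝ => x ^ 3 - x ^ 2 - ((m : ℝ) - 2) * x + (m : ℝ) - 6)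
      (Set.Icc r (m : ℝ)) := by
    apply Continuous.continuousOn
    fun_prop
  obtain ⟨s, hsmem, hs⟩ := intermediate_value_Icc hrm hQcont
    (Set.mem_Icc.mpr ⟨hQr.le, hQm.le⟩)
  have hsQ : s ^ 3 - s ^ 2 - ((m : ℝ) - 2) * s + (m : ℝ) - 6 = 0 := hs
  have hsr : r < s := by
    rcases lt_or_eq_of_le hsmem.1 with h | h
    · exact h
    · exfalso
      rw [← h] at hsQ
      linarith
  have hs7' : 7 < s := by linarith
  have hcast : ((m - 1 : ℕ) : ℝ) = (m : ℝ) - 1 := by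
    rw [Nat.cast_sub (by omega)]
    norm_num
  have hq' : s ^ 3 - s ^ 2 - (((m - 1 : ℕ) : ℝ) - 1) * s + ((m - 1 : ℕ) : ℝ) - 5 = 0 := by
    rw [hcast]
    linear_combination hsQ
  have hsmemS : s ∈ {t : ℝ | ∃ x : Fin (m - 1) → ℝ, x ≠ 0 ∧
      (Sgraph (m - 1) 2).adjMatrix ℝ *ᵥ x = t • x} := by
    refine ⟨RS.ySg (m - 1) (s * (s - 1)) s (s - 1), ?_, RS.Sg_eigenvec (m - 1) (by omega) s hq'⟩
    intro h
    have h0 := congrFun h (⟨0, by omega⟩ : Fin (m - 1))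
    simp only [RS.ySg, Pi.zero_apply] at h0
    norm_num at h0
    rcases h0 with h0 | h0 <;> linarith
  have hsle : s ≤ specRad (Sgraph (m - 1) 2) := by
    unfold specRad
    exact le_csSup (RS.eig_bddAbove _) hsmemS
  refine ⟨?_, ?_, ?_, ?_⟩
  · rw [hspec]
    exact hr1
  · rw [hspec]
    linarith
  · rw [hspec]
    exact hrP
  · intro y hy
    have hy0 : y ≠ 0 := by
      intro h
      rw [h] at hy
      norm_num at hy
      linarith
    have hy1 : y + 1 ≠ 0 := by
      intro h
      have hym : y = -1 := by linarith
      rw [hym] at hy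
      norm_num at hy
      linarith
    have hmemy : y ∈ {t : ℝ | ∃ x : Fin m → ℝ, x ≠ 0 ∧
        (G10 m).adjMatrix ℝ *ᵥ x = t • x} := by
      refine ⟨RS.xG10 m (y + 1) (y ^ 2 - (m : ℝ) + 3)
        ((y + 1 + (y ^ 2 - (m : ℝ) + 3)) / y) ((y + 1) / y) ((y ^ 2 - (m : ℝ) + 3) / y),
        ?_, RS.G10_eigenvec m hm y hy0 hy⟩
      intro h
      have h0 := congrFun h (⟨0, by omega⟩ : Fin m)
      simp only [RS.xG10, Pi.zero_apply] at h0
      norm_num at h0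
      exact hy1 (by linarith)
    have : y ≤ specRad (G10 m) := by
      unfold specRad
      exact le_csSup (RS.eig_bddAbove _) hmemy
    exact this
end

section
/- Let G be a connected graph, let u and v be two distinct vertices of G, and let v_1, ..., v_s be vertices in N(v) \ N(u) with each v_i ≠ u. Let X be a Perron vector of G, and let G' be the graph obtained from G by deleting the edges v v_i and adding the edges u v_i for i = 1, ..., s, with s ≥ 1. If x_u ≥ x_v, then ρ(G) < ρ(G'). -/
open Matrix SimpleGraph
open scoped Classical

section RayleighAux
open scoped RealInnerProductSpace

noncomputable def toE' {V : Type*} [Fintype V] (y : V → ℝ) : EuclideanSpace ℝ V := WithLp.toLp 2 y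

lemma dot_inner' {V : Type*} [Fintype V] (y z : V → ℝ) :
    y ⬝ᵥ z = ⟪toE' y, toE' z⟫ := by
  simp [toE', PiLp.inner_apply, RCLike.inner_apply, dotProduct, mul_comm]

lemma rayleigh_key' {V : Type*} [Fintype V] [Nonempty V]
    (A : Matrix V V ℝ) (hA : A.IsHermitian) :
    ∃ μ : ℝ, IsGreatest {t : ℝ | ∃ y : V → ℝ, y ≠ 0 ∧ A *ᵥ y = t • y} μ ∧
      (∀ y : V → ℝ, y ⬝ᵥ (A *ᵥ y) ≤ μ * (y ⬝ᵥ y)) ∧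
      (∀ y : V → ℝ, y ≠ 0 → y ⬝ᵥ (A *ᵥ y) = μ * (y ⬝ᵥ y) → A *ᵥ y = μ • y) := by
  obtain ⟨i0, hi0⟩ := Finite.exists_max hA.eigenvalues
  set b := hA.eigenvectorBasis with hbdef
  set lam := hA.eigenvalues with hlam
  set μ := hA.eigenvalues i0 with hmu
  set c : (V → ℝ) → V → ℝ := fun y i => ⟪toE' ⇑(b i), toE' y⟫ with hc
  have hrepr : ∀ y : V → ℝ, y = ∑ i, c y i • ⇑(b i) := fun y => by
    have h := congrArg WithLp.ofLp (b.sum_repr' (toE' y))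
    simp only [WithLp.ofLp_sum, WithLp.ofLp_smul] at h
    exact h.symm
  have hAy : ∀ y : V → ℝ, A *ᵥ y = ∑ i, (lam i * c y i) • ⇑(b i) := by
    intro y
    calc A *ᵥ y = A *ᵥ (∑ i, c y i • ⇑(b i)) := by rw [← hrepr]
    _ = ∑ i, c y i • (A *ᵥ ⇑(b i)) := by
        simp only [← mulVecLin_apply, map_sum, _root_.map_smul]
    _ = ∑ i, (lam i * c y i) • ⇑(b i) := by
        refine Finset.sum_congr rfl fun i _ => ?_
        rw [hA.mulVec_eigenvectorBasis, smul_smul, mul_comm]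
  have hinnerb : ∀ (y : V → ℝ) (i : V), ⟪toE' y, toE' ⇑(b i)⟫ = c y i := by
    intro y i; rw [real_inner_comm]
  have hdotsum : ∀ (y : V → ℝ) (f : V → ℝ),
      y ⬝ᵥ (∑ i, f i • ⇑(b i)) = ∑ i, f i * c y i := by
    intro y f
    rw [dot_inner']
    have : toE' (∑ i, f i • ⇑(b i)) = ∑ i, f i • (b i) := by
      simp only [toE', WithLp.toLp_sum, WithLp.toLp_smul, WithLp.toLp_ofLp]
    rw [this, inner_sum]
    refine Finset.sum_congr rfl fun i _ => ?_
    rw [real_inner_smul_right]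
    congr 1
    exact hinnerb y i
  have hnorm : ∀ y : V → ℝ, y ⬝ᵥ y = ∑ i, (c y i)^2 := by
    intro y
    nth_rewrite 2 [hrepr y]
    rw [hdotsum]
    simp [sq]
  have hquad : ∀ y : V → ℝ, y ⬝ᵥ (A *ᵥ y) = ∑ i, lam i * (c y i)^2 := by
    intro y
    rw [hAy, hdotsum]
    refine Finset.sum_congr rfl fun i _ => ?_; ring
  have hub : ∀ y : V → ℝ, y ⬝ᵥ (A *ᵥ y) ≤ μ * (y ⬝ᵥ y) := by
    intro y
    rw [hquad, hnorm, Finset.mul_sum]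
    refine Finset.sum_le_sum fun i _ => ?_
    have := sq_nonneg (c y i)
    nlinarith [hi0 i]
  have hpos : ∀ y : V → ℝ, y ≠ 0 → 0 < y ⬝ᵥ y := by
    intro y hy
    rcases Function.ne_iff.1 hy with ⟨j, hj⟩
    have : (0:ℝ) < ∑ i, (y i)^2 := by
      refine Finset.sum_pos' (fun i _ => sq_nonneg _) ⟨j, Finset.mem_univ j, ?_⟩
      exact lt_of_le_of_ne (sq_nonneg _) (Ne.symm (pow_ne_zero 2 (by simpa using hj)))
    simpa [dotProduct, sq] using this
  refine ⟨μ, ⟨⟨⇑(b i0), ?_, ?_⟩, ?_⟩, hub, ?_⟩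
  · intro h
    have h2 := b.orthonormal.1 i0
    rw [show b i0 = (0 : EuclideanSpace ℝ V) from (WithLp.ofLp_eq_zero 2).1 h] at h2
    simp at h2
  · exact hA.mulVec_eigenvectorBasis i0
  · rintro t ⟨y, hy, hEig⟩
    have h1 : y ⬝ᵥ (A *ᵥ y) = t * (y ⬝ᵥ y) := by rw [hEig, dotProduct_smul]; rfl
    have := hub y
    rw [h1] at this
    exact le_of_mul_le_mul_right (by linarith [hpos y hy]) (hpos y hy)
  · intro y hy heqq
    rw [hquad, hnorm, Finset.mul_sum] at heqq
    have hzero : ∀ i ∈ Finset.univ, (μ - lam i) * (c y i)^2 = 0 := by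
      have hsum : ∑ i, (μ - lam i) * (c y i)^2 = 0 := by
        have : ∑ i, (μ - lam i) * (c y i)^2
            = ∑ i, μ * (c y i)^2 - ∑ i, lam i * (c y i)^2 := by
          rw [← Finset.sum_sub_distrib]
          exact Finset.sum_congr rfl fun i _ => by ring
        rw [this, ← heqq]; ring
      refine (Finset.sum_eq_zero_iff_of_nonneg fun i _ => ?_).1 hsum
      exact mul_nonneg (by linarith [hi0 i]) (sq_nonneg _)
    have hterm : ∀ i, lam i * c y i = μ * c y i := by
      intro i
      have h := hzero i (Finset.mem_univ i)
      rcases mul_eq_zero.1 h with h | h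
      · have : lam i = μ := by linarith
        rw [this]
      · have : c y i = 0 := by
          have := sq_eq_zero_iff.1 h; exact this
        rw [this]; ring
    rw [hAy]
    conv_rhs => rw [hrepr y]
    rw [Finset.smul_sum]
    refine Finset.sum_congr rfl fun i _ => ?_
    rw [hterm, smul_smul]

end RayleighAux

private lemma entry_identity {V : Type*} [Fintype V] [DecidableEq V] {G : SimpleGraph V}
    {u v : V} (huv : u ≠ v) {S : Finset V}
    (hS : ∀ w ∈ S, G.Adj v w ∧ ¬ G.Adj u w) (huS : u ∉ S) (hvS : v ∉ S)
    {G' : SimpleGraph V}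
    (hadj' : ∀ a b : V, G'.Adj a b ↔
      ((G.Adj a b ∧ ¬(a = v ∧ b ∈ S) ∧ ¬(b = v ∧ a ∈ S)) ∨
        (a = u ∧ b ∈ S) ∨ (b = u ∧ a ∈ S))) :
    ∀ a b : V, G'.adjMatrix ℝ a b = G.adjMatrix ℝ a b
      + ((if a = u ∧ b ∈ S then (1:ℝ) else 0) + (if b = u ∧ a ∈ S then (1:ℝ) else 0))
      - ((if a = v ∧ b ∈ S then (1:ℝ) else 0) + (if b = v ∧ a ∈ S then (1:ℝ) else 0)) := by
  intro a b
  simp only [SimpleGraph.adjMatrix_apply]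
  by_cases hP1 : a = u ∧ b ∈ S
  · have hA : ¬ G.Adj a b := by
      obtain ⟨rfl, h⟩ := hP1; exact (hS b h).2
    have hP2 : ¬(b = u ∧ a ∈ S) := by
      rintro ⟨-, h⟩; exact huS (hP1.1 ▸ h)
    have hP3 : ¬(a = v ∧ b ∈ S) := by
      rintro ⟨rfl, -⟩; exact huv hP1.1.symm
    have hP4 : ¬(b = v ∧ a ∈ S) := by
      rintro ⟨-, h⟩; exact huS (hP1.1 ▸ h)
    rw [if_pos ((hadj' a b).2 (Or.inr (Or.inl hP1))), if_neg hA, if_pos hP1,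
      if_neg hP2, if_neg hP3, if_neg hP4]
    norm_num
  · by_cases hP2 : b = u ∧ a ∈ S
    · have hA : ¬ G.Adj a b := by
        obtain ⟨rfl, h⟩ := hP2; exact fun hadj => (hS a h).2 hadj.symm
      have hP3 : ¬(a = v ∧ b ∈ S) := by
        rintro ⟨rfl, -⟩; exact hvS hP2.2
      have hP4 : ¬(b = v ∧ a ∈ S) := by
        rintro ⟨h, -⟩; exact huv (hP2.1.symm.trans h)
      rw [if_pos ((hadj' a b).2 (Or.inr (Or.inr hP2))), if_neg hA, if_neg hP1,
        if_pos hP2, if_neg hP3, if_neg hP4]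
      norm_num
    · by_cases hP3 : a = v ∧ b ∈ S
      · have hA : G.Adj a b := by
          obtain ⟨rfl, h⟩ := hP3; exact (hS b h).1
        have hP4 : ¬(b = v ∧ a ∈ S) := by
          rintro ⟨-, h⟩; exact hvS (hP3.1 ▸ h)
        have hG'A : ¬ G'.Adj a b := by
          rw [hadj' a b]
          rintro (⟨-, h, -⟩ | h | h)
          exacts [h hP3, hP1 h, hP2 h]
        rw [if_neg hG'A, if_pos hA, if_neg hP1, if_neg hP2, if_pos hP3, if_neg hP4]
        norm_num
      · by_cases hP4 : b = v ∧ a ∈ S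
        · have hA : G.Adj a b := by
            obtain ⟨rfl, h⟩ := hP4; exact ((hS a h).1).symm
          have hG'A : ¬ G'.Adj a b := by
            rw [hadj' a b]
            rintro (⟨-, -, h⟩ | h | h)
            exacts [h hP4, hP1 h, hP2 h]
          rw [if_neg hG'A, if_pos hA, if_neg hP1, if_neg hP2, if_neg hP3, if_pos hP4]
          norm_num
        · rw [if_neg hP1, if_neg hP2, if_neg hP3, if_neg hP4]
          by_cases hA : G.Adj a b
          · rw [if_pos ((hadj' a b).2 (Or.inl ⟨hA, hP3, hP4⟩)), if_pos hA]
            norm_num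
          · have hG'A : ¬ G'.Adj a b := by
              rw [hadj' a b]
              rintro (⟨h, -, -⟩ | h | h)
              exacts [hA h, hP1 h, hP2 h]
            rw [if_neg hG'A, if_neg hA]
            norm_num

/-- Rotation lemma: if `S` is a nonempty set of vertices adjacent to `v` but not to `u`
(and not containing `u`), `x` is a Perron vector of the connected graph `G` with
`x_u ≥ x_v`, and `G'` is obtained from `G` by replacing each edge `v-w` (`w ∈ S`) by
the edge `u-w`, then `ρ(G) < ρ(G')`. -/
theorem stmt16 {V : Type*} [Fintype V] (G : SimpleGraph V) (hconn : G.Connected)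
    (u v : V) (huv : u ≠ v) (S : Finset V) (hSne : S.Nonempty)
    (hS : ∀ w ∈ S, G.Adj v w ∧ ¬ G.Adj u w) (huS : u ∉ S)
    (x : V → ℝ) (hx : IsPerronVector G x) (hxuv : x v ≤ x u)
    (G' : SimpleGraph V)
    (hG' : G' = SimpleGraph.fromRel (fun a b =>
      (G.Adj a b ∧ ¬(a = v ∧ b ∈ S) ∧ ¬(b = v ∧ a ∈ S)) ∨ (a = u ∧ b ∈ S))) :
    specRad G < specRad G' := by
  haveI : Nonempty V := hconn.nonempty
  have hvS : v ∉ S := fun h => G.loopless.irrefl v (hS v h).1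
  set T : ℝ := ∑ w ∈ S, x w with hTdef
  have hT : 0 < T := Finset.sum_pos (fun w _ => hx.1 w) hSne
  have hHerm : (G'.adjMatrix ℝ).IsHermitian := by
    rw [Matrix.IsHermitian, Matrix.conjTranspose]
    ext i j
    simp [adj_comm]
  obtain ⟨μ, hgr, hub, heqc⟩ := rayleigh_key' (G'.adjMatrix ℝ) hHerm
  have hspec' : specRad G' = μ := hgr.csSup_eq
  -- adjacency characterization
  have hadj' : ∀ a b : V, G'.Adj a b ↔
      ((G.Adj a b ∧ ¬(a = v ∧ b ∈ S) ∧ ¬(b = v ∧ a ∈ S)) ∨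
        (a = u ∧ b ∈ S) ∨ (b = u ∧ a ∈ S)) := by
    intro a b
    rw [hG', SimpleGraph.fromRel_adj]
    constructor
    · rintro ⟨hne, h | h⟩
      · rcases h with ⟨h1, h2, h3⟩ | h
        · exact Or.inl ⟨h1, h2, h3⟩
        · exact Or.inr (Or.inl h)
      · rcases h with ⟨h1, h2, h3⟩ | h
        · exact Or.inl ⟨h1.symm, h3, h2⟩
        · exact Or.inr (Or.inr h)
    · rintro (⟨h1, h2, h3⟩ | ⟨rfl, hbS⟩ | ⟨rfl, haS⟩)
      · exact ⟨h1.ne, Or.inl (Or.inl ⟨h1, h2, h3⟩)⟩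
      · exact ⟨fun h => huS (h ▸ hbS), Or.inl (Or.inr ⟨rfl, hbS⟩)⟩
      · exact ⟨fun h => huS (h.symm ▸ haS), Or.inr (Or.inr ⟨rfl, haS⟩)⟩
  have hent := entry_identity huv hS huS hvS hadj'
  -- sum over S helper
  have hT1 : ∑ b, (if b ∈ S then (1:ℝ) else 0) * x b = T := by
    simp only [ite_mul, one_mul, zero_mul]
    rw [Finset.sum_ite_mem, Finset.univ_inter]
  -- row at v
  have hrowv : (G'.adjMatrix ℝ *ᵥ x) v = (G.adjMatrix ℝ *ᵥ x) v - T := by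
    have hvu : v ≠ u := Ne.symm huv
    simp only [mulVec, dotProduct]
    calc ∑ b, G'.adjMatrix ℝ v b * x b
        = ∑ b, (G.adjMatrix ℝ v b * x b - (if b ∈ S then (1:ℝ) else 0) * x b) := by
          refine Finset.sum_congr rfl fun b _ => ?_
          rw [hent v b]
          have hvu' : ¬(v = u) := hvu
          first
          | (simp only [hvu', hvS, false_and, and_false, if_false, if_neg,
              not_false_iff, eq_self_iff_true, true_and, add_zero, zero_add]
             ring)
          | (simp [hvu', hvS]; ring)
          | simp [hvu', hvS]
      _ = (∑ b, G.adjMatrix ℝ v b * x b) - T := by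
          rw [Finset.sum_sub_distrib, hT1]
  -- the quadratic form identity
  have hdbl1 : ∀ p : V, ∑ a, ∑ b, x a * (if a = p ∧ b ∈ S then (1:ℝ) else 0) * x b
      = x p * T := by
    intro p
    have hinn : ∀ a : V, ∑ b, x a * (if a = p ∧ b ∈ S then (1:ℝ) else 0) * x b
        = if a = p then x a * T else 0 := by
      intro a
      by_cases ha : a = p
      · subst ha
        simp only [true_and, if_pos rfl]
        rw [← hT1, Finset.mul_sum]
        refine Finset.sum_congr rfl fun b _ => ?_
        ring
      · simp [ha]
    rw [Finset.sum_congr rfl fun a _ => hinn a]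
    simp
  have hdbl2 : ∀ p : V, ∑ a, ∑ b, x a * (if b = p ∧ a ∈ S then (1:ℝ) else 0) * x b
      = x p * T := by
    intro p
    have hinn : ∀ a : V, ∑ b, x a * (if b = p ∧ a ∈ S then (1:ℝ) else 0) * x b
        = (if a ∈ S then (1:ℝ) else 0) * (x a * x p) := by
      intro a
      by_cases ha : a ∈ S
      · simp only [ha, and_true, if_true, one_mul]
        rw [Finset.sum_eq_single p]
        · simp
        · intro b _ hb; simp [hb]
        · simp
      · simp [ha]
    rw [Finset.sum_congr rfl fun a _ => hinn a]
    simp only [ite_mul, one_mul, zero_mul]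
    rw [Finset.sum_ite_mem, Finset.univ_inter, ← Finset.sum_mul]
    rw [mul_comm]
  -- quadratic form expansion
  have hexp : ∀ M : Matrix V V ℝ, x ⬝ᵥ (M *ᵥ x) = ∑ a, ∑ b, x a * M a b * x b := by
    intro M
    simp only [dotProduct, mulVec, Finset.mul_sum]
    exact Finset.sum_congr rfl fun a _ => Finset.sum_congr rfl fun b _ => by ring
  have hdot : x ⬝ᵥ (G'.adjMatrix ℝ *ᵥ x)
      = x ⬝ᵥ (G.adjMatrix ℝ *ᵥ x) + 2*(x u - x v)*T := by
    rw [hexp, hexp]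
    have hterm : ∀ a b : V, x a * G'.adjMatrix ℝ a b * x b
        = x a * G.adjMatrix ℝ a b * x b
          + (x a * (if a = u ∧ b ∈ S then (1:ℝ) else 0) * x b
             + x a * (if b = u ∧ a ∈ S then (1:ℝ) else 0) * x b)
          - (x a * (if a = v ∧ b ∈ S then (1:ℝ) else 0) * x b
             + x a * (if b = v ∧ a ∈ S then (1:ℝ) else 0) * x b) := by
      intro a b; rw [hent a b]; ring
    rw [Finset.sum_congr rfl fun a _ => Finset.sum_congr rfl fun b _ => hterm a b]
    simp only [Finset.sum_add_distrib, Finset.sum_sub_distrib]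
    rw [hdbl1 u, hdbl2 u, hdbl1 v, hdbl2 v]
    ring
  have hq : 0 < x ⬝ᵥ x := by
    have : (0:ℝ) < ∑ i, x i * x i :=
      Finset.sum_pos (fun i _ => mul_pos (hx.1 i) (hx.1 i)) Finset.univ_nonempty
    simpa [dotProduct] using this
  have hxA : x ⬝ᵥ (G.adjMatrix ℝ *ᵥ x) = specRad G * (x ⬝ᵥ x) := by
    rw [hx.2, dotProduct_smul]; rfl
  have hDT : 0 ≤ 2*(x u - x v)*T := mul_nonneg (by linarith) hT.le
  have hle : specRad G ≤ μ := by
    have h1 := hub x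
    rw [hdot, hxA] at h1
    exact le_of_mul_le_mul_right (by linarith) hq
  have hxne : x ≠ 0 := by
    intro h
    have h0 := hx.1 (Classical.arbitrary V)
    rw [h] at h0; simp at h0
  rw [hspec']
  refine lt_of_le_of_ne hle fun hEq => ?_
  have hdd : x ⬝ᵥ (G'.adjMatrix ℝ *ᵥ x) = μ * (x ⬝ᵥ x) := by
    refine le_antisymm (hub x) ?_
    rw [hdot, hxA, ← hEq]
    linarith
  have hev := heqc x hxne hdd
  have h5 : (G'.adjMatrix ℝ *ᵥ x) v = μ * x v := by rw [hev]; rfl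
  have h6 : (G.adjMatrix ℝ *ᵥ x) v = specRad G * x v := by rw [hx.2]; rfl
  rw [hrowv, h6, ← hEq] at h5
  linarith
end
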